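/- arXiv:math/0701056 — 8 statements merged into one kernel-verified Lean document; each statement's English description precedes it below -/
import Mathlib

section
/- Let T > 0 and let Y : ℝ → ℍ be twice differentiable with ‖Y(t)‖ = 1 for all t ∈ [0,T]. Let ω1, ω2, ω3 : ℝ → ℝ be functions, with ω2 and ω3 differentiable, such that Y'(t)·Y(t)* = ω1(t) e1 + ω2(t) e2 + ω3(t) e3 and ω2(t)² + ω3(t)² > 0 for all t ∈ [0,T]. Let θ : ℝ → ℝ be differentiable with cos θ(t) = ω2(t)/√(ω2(t)² + ω3(t)²) and sin θ(t) = −ω3(t)/√(ω2(t)² + ω3(t)²) on [0,T]. Then for every n ∈ {0,1,2,3}, the curve q(t) = e1ⁿ · exp(θ(t)/2 · e1) · Y(t) satisfies ‖q(t)‖ = 1 and q'(t) = (u1(t) e1 + u2(t) e2) · q(t) for all t ∈ [0,T], where u1 = ω1 + (ω3·ω2' − ω2·ω3')/(2(ω2² + ω3²)) and u2 = (−1)ⁿ · √(ω2² + ω3²). -/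
/-!
Multiplying `Y` on the left by `qexp (θ/2)` conjugates the generator `Ω = Y' Y*`: since
`ω2 e2 + ω3 e3 = r · qexp (-θ) · e2` with `r = √(ω2² + ω3²)`, and `e2 · qexp φ = qexp (-φ) · e2`,
the rotation by `θ/2` turns its `e2, e3` part into `r e2`, while the derivative of the rotation
adds `θ'/2` to the `e1` coefficient. Differentiating the polar relations `ω2 = r cos θ`,
`ω3 = -r sin θ` gives `θ' (ω2² + ω3²) = ω3 ω2' - ω2 ω3'`. Finally, `e1ⁿ` commutes with `e1` and
anticommutes `n` times with `e2`, which accounts for the sign `(-1)ⁿ`.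
-/

open Quaternion Set

/-- The imaginary quaternion unit `i`. -/
noncomputable def e1 : ℍ[ℝ] := ⟨0, 1, 0, 0⟩
/-- The imaginary quaternion unit `j`. -/
noncomputable def e2 : ℍ[ℝ] := ⟨0, 0, 1, 0⟩
/-- The imaginary quaternion unit `k`. -/
noncomputable def e3 : ℍ[ℝ] := ⟨0, 0, 0, 1⟩

/-- `qexp φ = exp (φ e1) = cos φ + (sin φ) e1`. -/
noncomputable def qexp (φ : ℝ) : ℍ[ℝ] :=
  (Real.cos φ : ℍ[ℝ]) + (Real.sin φ : ℍ[ℝ]) * e1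

lemma e2_mul_e1 : e2 * e1 = -(e1 * e2) := by
  ext <;> simp [re_mul, imI_mul, imJ_mul, imK_mul] <;> simp [e1, e2]

lemma e2_mul_e1_pow (n : ℕ) : e2 * e1 ^ n = (-1 : ℝ) ^ n • (e1 ^ n * e2) := by
  induction n with
  | zero => simp
  | succ n ih =>
    rw [pow_succ, ← mul_assoc, ih, smul_mul_assoc, mul_assoc, e2_mul_e1, pow_succ, mul_neg,
      mul_assoc]
    module

lemma mul_e1_pow (n : ℕ) (u v : ℝ) :
    ((u : ℍ[ℝ]) * e1 + (((-1) ^ n * v : ℝ) : ℍ[ℝ]) * e2) * e1 ^ n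
      = e1 ^ n * ((u : ℍ[ℝ]) * e1 + (v : ℍ[ℝ]) * e2) := by
  have hsign : (-1 : ℝ) ^ n * v * (-1) ^ n = v := by
    rw [mul_comm, ← mul_assoc, ← mul_pow]; simp
  simp only [coe_mul_eq_smul, smul_mul_assoc, add_mul, e2_mul_e1_pow, mul_add, mul_smul_comm,
    ← pow_succ, ← pow_succ', smul_smul, hsign]

lemma qexp_add (a b : ℝ) : qexp (a + b) = qexp a * qexp b := by
  ext <;> simp [qexp, re_mul, imI_mul, imJ_mul, imK_mul, Real.cos_add, Real.sin_add] <;>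
    simp [e1]; ring

lemma commute_e1_qexp (φ : ℝ) : Commute e1 (qexp φ) := by
  ext <;> simp [qexp, re_mul, imI_mul, imJ_mul, imK_mul] <;> simp [e1]

lemma e2_mul_qexp (φ : ℝ) : e2 * qexp φ = qexp (-φ) * e2 := by
  ext <;> simp [qexp, re_mul, imI_mul, imJ_mul, imK_mul] <;> simp [e1, e2]

lemma polar_mul_e2_add_mul_e3 (r φ : ℝ) :
    ((r * Real.cos φ : ℝ) : ℍ[ℝ]) * e2 + ((-(r * Real.sin φ) : ℝ) : ℍ[ℝ]) * e3
      = r * (qexp (-φ) * e2) := by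
  ext <;> simp [qexp, re_mul, imI_mul, imJ_mul, imK_mul] <;> simp [e1, e2, e3]

lemma control_mul_qexp_half (a w r φ : ℝ) :
    (((w + a : ℝ) : ℍ[ℝ]) * e1 + (r : ℍ[ℝ]) * e2) * qexp (φ / 2)
      = a • (qexp (φ / 2) * e1) + qexp (φ / 2) * ((w : ℍ[ℝ]) * e1
          + ((r * Real.cos φ : ℝ) : ℍ[ℝ]) * e2 + ((-(r * Real.sin φ) : ℝ) : ℍ[ℝ]) * e3) := by
  have hrot : qexp (φ / 2) * qexp (-φ) * e2 = e2 * qexp (φ / 2) := by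
    rw [← qexp_add, e2_mul_qexp]; ring_nf
  rw [add_assoc, polar_mul_e2_add_mul_e3]
  simp only [coe_mul_eq_smul, add_mul, mul_add, smul_mul_assoc, mul_smul_comm, ← mul_assoc, hrot,
    (commute_e1_qexp _).eq, add_smul]
  abel

lemma norm_eq_one_of_normSq {q : ℍ[ℝ]} (h : normSq q = 1) : ‖q‖ = 1 := by
  rwa [normSq_eq_norm_mul_self, mul_self_eq_one_iff, or_iff_left (by linarith [norm_nonneg q])]
    at h

lemma norm_e1 : ‖e1‖ = 1 := norm_eq_one_of_normSq (by rw [normSq_def']; simp [e1])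

lemma norm_qexp (φ : ℝ) : ‖qexp φ‖ = 1 :=
  norm_eq_one_of_normSq (by
    rw [normSq_def']; simp [qexp, re_mul, imI_mul, imJ_mul, imK_mul]; simp [e1])

lemma eq_mul_of_mul_star_eq {y a b : ℍ[ℝ]} (hy : ‖y‖ = 1) (h : a * star y = b) : a = b * y := by
  rw [← h, mul_assoc, star_mul_self, normSq_eq_norm_mul_self, hy, mul_one, coe_one, mul_one]

lemma hasDerivAt_qexp (φ : ℝ) : HasDerivAt qexp (qexp φ * e1) φ := by
  have hq : qexp = fun φ => Real.cos φ • (1 : ℍ[ℝ]) + Real.sin φ • e1 := by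
    ext1 φ; simp [qexp, ← coe_mul_eq_smul]
  rw [hq]
  refine (((Real.hasDerivAt_cos φ).smul_const (1 : ℍ[ℝ])).fun_add
    ((Real.hasDerivAt_sin φ).smul_const e1)).congr_deriv ?_
  ext <;> simp [re_mul, imI_mul, imJ_mul, imK_mul] <;> simp [e1]

lemma polar_of_cos_eq_of_sin_eq {x y φ : ℝ} (hxy : 0 < x ^ 2 + y ^ 2)
    (hcos : Real.cos φ = x / √(x ^ 2 + y ^ 2)) (hsin : Real.sin φ = -y / √(x ^ 2 + y ^ 2)) :
    x = √(x ^ 2 + y ^ 2) * Real.cos φ ∧ y = -(√(x ^ 2 + y ^ 2) * Real.sin φ) := by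
  have hr : √(x ^ 2 + y ^ 2) ≠ 0 := (Real.sqrt_pos.2 hxy).ne'
  rw [hcos, hsin]
  constructor <;> field_simp

lemma HasDerivAt.eq_zero_of_eqOn_zero {f : ℝ → ℝ} {f' t : ℝ} {s : Set ℝ} (hf : HasDerivAt f f' t)
    (hs : UniqueDiffWithinAt ℝ s t) (ht : t ∈ s) (h0 : EqOn f 0 s) : f' = 0 :=
  hs.eq_deriv s hf.hasDerivWithinAt ((hasDerivWithinAt_const t s 0).congr h0 (h0 ht))

lemma polar_angle_deriv_mul_sq_add_sq {f g θ : ℝ → ℝ} {f' g' θ' t : ℝ} {s : Set ℝ}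
    (hs : UniqueDiffWithinAt ℝ s t) (ht : t ∈ s)
    (hf : HasDerivAt f f' t) (hg : HasDerivAt g g' t) (hθ : HasDerivAt θ θ' t)
    (hpolar : ∀ u ∈ s, ∃ r, f u = r * Real.cos (θ u) ∧ g u = -(r * Real.sin (θ u))) :
    θ' * (f t ^ 2 + g t ^ 2) = g t * f' - f t * g' := by
  -- The radius need not be differentiable: `f sin θ + g cos θ` vanishes on `s` whatever it is.
  have hcross : EqOn (fun u => f u * Real.sin (θ u) + g u * Real.cos (θ u)) 0 s := by
    intro u hu
    obtain ⟨r, hfu, hgu⟩ := hpolar u hu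
    simp only [hfu, hgu, Pi.zero_apply]
    ring
  have hderiv := ((hf.mul hθ.sin).add (hg.mul hθ.cos)).eq_zero_of_eqOn_zero hs ht hcross
  obtain ⟨r, hft, hgt⟩ := hpolar t ht
  rw [hft, hgt] at hderiv ⊢
  linear_combination r * hderiv

theorem stmt_0_general
    (T : ℝ) (hT : 0 < T)
    (Y Y' : ℝ → ℍ[ℝ])
    (hY : ∀ t ∈ Icc (0:ℝ) T, HasDerivAt Y (Y' t) t)
    (hYnorm : ∀ t ∈ Icc (0:ℝ) T, ‖Y t‖ = 1)
    (ω1 ω2 ω3 ω2' ω3' : ℝ → ℝ)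
    (hω2 : ∀ t ∈ Icc (0:ℝ) T, HasDerivAt ω2 (ω2' t) t)
    (hω3 : ∀ t ∈ Icc (0:ℝ) T, HasDerivAt ω3 (ω3' t) t)
    (hYY : ∀ t ∈ Icc (0:ℝ) T,
      Y' t * star (Y t) =
        ((ω1 t : ℝ) : ℍ[ℝ]) * e1 + ((ω2 t : ℝ) : ℍ[ℝ]) * e2 + ((ω3 t : ℝ) : ℍ[ℝ]) * e3)
    (hpos : ∀ t ∈ Icc (0:ℝ) T, 0 < ω2 t ^ 2 + ω3 t ^ 2)
    (θ θ' : ℝ → ℝ)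
    (hθ : ∀ t ∈ Icc (0:ℝ) T, HasDerivAt θ (θ' t) t)
    (hcos : ∀ t ∈ Icc (0:ℝ) T,
      Real.cos (θ t) = ω2 t / Real.sqrt (ω2 t ^ 2 + ω3 t ^ 2))
    (hsin : ∀ t ∈ Icc (0:ℝ) T,
      Real.sin (θ t) = - ω3 t / Real.sqrt (ω2 t ^ 2 + ω3 t ^ 2)) :
    ∀ n : ℕ, n ≤ 3 → ∀ t ∈ Icc (0:ℝ) T,
      ‖e1 ^ n * qexp (θ t / 2) * Y t‖ = 1 ∧
      HasDerivAt (fun s => e1 ^ n * qexp (θ s / 2) * Y s)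
        (((((ω1 t + (ω3 t * ω2' t - ω2 t * ω3' t) /
              (2 * (ω2 t ^ 2 + ω3 t ^ 2))) : ℝ) : ℍ[ℝ]) * e1 +
          ((((-1 : ℝ) ^ n * Real.sqrt (ω2 t ^ 2 + ω3 t ^ 2)) : ℝ) : ℍ[ℝ]) * e2) *
          (e1 ^ n * qexp (θ t / 2) * Y t)) t := by
  intro n _ t ht
  have hpolar u (hu : u ∈ Icc (0:ℝ) T) :=
    polar_of_cos_eq_of_sin_eq (hpos u hu) (hcos u hu) (hsin u hu)
  have hθ' := polar_angle_deriv_mul_sq_add_sq (uniqueDiffOn_Icc hT t ht) ht (hω2 t ht) (hω3 t ht)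
    (hθ t ht) fun u hu => ⟨_, hpolar u hu⟩
  have hu1 : ω1 t + (ω3 t * ω2' t - ω2 t * ω3' t) / (2 * (ω2 t ^ 2 + ω3 t ^ 2))
      = ω1 t + θ' t / 2 := by
    rw [← hθ', mul_div_mul_comm, div_self (hpos t ht).ne', mul_one]
  obtain ⟨hω2t, hω3t⟩ := hpolar t ht
  set r := √(ω2 t ^ 2 + ω3 t ^ 2)
  refine ⟨by rw [norm_mul, norm_mul, norm_pow, norm_e1, norm_qexp, hYnorm t ht, one_pow, one_mul,
    one_mul], ?_⟩
  refine ((((hasDerivAt_qexp _).scomp t ((hθ t ht).div_const 2)).const_mul (e1 ^ n)).mul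
    (hY t ht)).congr_deriv ?_
  rw [eq_mul_of_mul_star_eq (hYnorm t ht) (hYY t ht), hu1, hω2t, hω3t, Function.comp_apply]
  calc _ = e1 ^ n * ((((ω1 t + θ' t / 2 : ℝ) : ℍ[ℝ]) * e1 + (r : ℍ[ℝ]) * e2) * qexp (θ t / 2))
        * Y t := by
        rw [control_mul_qexp_half]; noncomm_ring
    _ = _ := by rw [← mul_assoc (e1 ^ n), ← mul_e1_pow]; simp only [mul_assoc]

theorem stmt_0
    (T : ℝ) (hT : 0 < T)
    (Y Y' Y'' : ℝ → ℍ[ℝ])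
    (hY : ∀ t ∈ Icc (0:ℝ) T, HasDerivAt Y (Y' t) t)
    (hY' : ∀ t ∈ Icc (0:ℝ) T, HasDerivAt Y' (Y'' t) t)
    (hYnorm : ∀ t ∈ Icc (0:ℝ) T, ‖Y t‖ = 1)
    (ω1 ω2 ω3 ω2' ω3' : ℝ → ℝ)
    (hω2 : ∀ t ∈ Icc (0:ℝ) T, HasDerivAt ω2 (ω2' t) t)
    (hω3 : ∀ t ∈ Icc (0:ℝ) T, HasDerivAt ω3 (ω3' t) t)
    (hYY : ∀ t ∈ Icc (0:ℝ) T,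
      Y' t * star (Y t) =
        ((ω1 t : ℝ) : ℍ[ℝ]) * e1 + ((ω2 t : ℝ) : ℍ[ℝ]) * e2 + ((ω3 t : ℝ) : ℍ[ℝ]) * e3)
    (hpos : ∀ t ∈ Icc (0:ℝ) T, 0 < ω2 t ^ 2 + ω3 t ^ 2)
    (θ θ' : ℝ → ℝ)
    (hθ : ∀ t ∈ Icc (0:ℝ) T, HasDerivAt θ (θ' t) t)
    (hcos : ∀ t ∈ Icc (0:ℝ) T,
      Real.cos (θ t) = ω2 t / Real.sqrt (ω2 t ^ 2 + ω3 t ^ 2))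
    (hsin : ∀ t ∈ Icc (0:ℝ) T,
      Real.sin (θ t) = - ω3 t / Real.sqrt (ω2 t ^ 2 + ω3 t ^ 2)) :
    ∀ n : ℕ, n ≤ 3 → ∀ t ∈ Icc (0:ℝ) T,
      ‖e1 ^ n * qexp (θ t / 2) * Y t‖ = 1 ∧
      HasDerivAt (fun s => e1 ^ n * qexp (θ s / 2) * Y s)
        (((((ω1 t + (ω3 t * ω2' t - ω2 t * ω3' t) /
              (2 * (ω2 t ^ 2 + ω3 t ^ 2))) : ℝ) : ℍ[ℝ]) * e1 +
          ((((-1 : ℝ) ^ n * Real.sqrt (ω2 t ^ 2 + ω3 t ^ 2)) : ℝ) : ℍ[ℝ]) * e2) *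
          (e1 ^ n * qexp (θ t / 2) * Y t)) t :=
  stmt_0_general T hT Y Y' hY hYnorm ω1 ω2 ω3 ω2' ω3' hω2 hω3 hYY hpos θ θ' hθ hcos hsin
end

section
/- Let φ, ω1, ω2, ω3 be real numbers and set k = exp(φ e1) and w = ω1 e1 + ω2 e2 + ω3 e3. Then e3 · (k·w·k*) · e3 = k·w·k* holds if and only if k⁴ · (ω2 + ω3 e1) = ω2 − ω3 e1. -/
open Quaternion Set

/-!
Identify `ℂ` with the subalgebra spanned by `1` and `e1`, so that `ℍ = ℂ ⊕ ℂ e2`. Then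
`k = exp (φ i)` is a unit complex number and `w = ω1 e1 + z e2` with `z = ω2 + ω3 i`. Since
`e2 c = conj c e2` for complex `c`, conjugation by `k` gives `k w k* = ω1 e1 + (k² z) e2`.
The map `x ↦ e3 x e3` fixes a quaternion iff its real and `e3` parts vanish, and the `e3` part of
`ω1 e1 + (k² z) e2` is `Im (k² z)`. Finally `Im (k² z) = 0 ↔ k² z = conj k² conj z ↔ k⁴ z = conj z`,
multiplying by `k²` and using `k conj k = 1`.
-/

open ComplexConjugate

theorem Complex.im_sq_mul_eq_zero_iff {u z : ℂ} (hu : Complex.normSq u = 1) :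
    (u ^ 2 * z).im = 0 ↔ u ^ 4 * z = conj z := by
  have hu' : u * conj u = 1 := by rw [Complex.mul_conj, hu, Complex.ofReal_one]
  have hu0 : u ^ 2 ≠ 0 := pow_ne_zero 2 (left_ne_zero_of_mul_eq_one hu')
  have hcancel : u ^ 2 * (conj u ^ 2 * conj z) = conj z := by
    rw [← mul_assoc, ← mul_pow, hu', one_pow, one_mul]
  rw [← Complex.conj_eq_iff_im, eq_comm, ← mul_right_inj' hu0, map_mul, map_pow, hcancel,
    ← mul_assoc, ← pow_add, eq_comm]

namespace Quaternion

theorem e1_eq_coeComplex_I : e1 = ((Complex.I : ℂ) : ℍ[ℝ]) := rfl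

theorem e1_mul_e2 : e1 * e2 = e3 := by
  ext <;> simp only [re_mul, imI_mul, imJ_mul, imK_mul] <;> simp [e1, e2, e3]

theorem e2_mul_coeComplex (z : ℂ) : e2 * z = (conj z : ℂ) * e2 := by
  ext <;> simp only [re_mul, imI_mul, imJ_mul, imK_mul] <;> simp [e2]

theorem e3_mul_mul_e3_eq_self_iff (q : ℍ[ℝ]) : e3 * q * e3 = q ↔ q.re = 0 ∧ q.imK = 0 := by
  simp only [Quaternion.ext_iff, re_mul, imI_mul, imJ_mul, imK_mul]
  simp only [e3, mul_zero, zero_mul, mul_one, sub_zero, add_zero, zero_add, zero_sub]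
  constructor
  · rintro ⟨hre, himK⟩
    constructor <;> linarith
  · rintro ⟨hre, himK⟩
    simp [hre, himK]

theorem star_coeComplex (z : ℂ) : star (z : ℍ[ℝ]) = (conj z : ℂ) := by
  ext <;> simp

theorem coeComplex_pow (z : ℂ) (n : ℕ) : ((z ^ n : ℂ) : ℍ[ℝ]) = (z : ℍ[ℝ]) ^ n :=
  map_pow ofComplex z n

theorem coeComplex_injective : Function.Injective ((↑) : ℂ → ℍ[ℝ]) := fun _ _ h ↦
  Complex.ext (congrArg QuaternionAlgebra.re h) (congrArg QuaternionAlgebra.imI h)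

theorem coe_add_coe_mul_e1 (a b : ℝ) :
    (a : ℍ[ℝ]) + (b : ℍ[ℝ]) * e1 = ((a + b * Complex.I : ℂ) : ℍ[ℝ]) := by
  rw [coeComplex_add, coeComplex_mul, coeComplex_coe, coeComplex_coe, e1_eq_coeComplex_I]

theorem qexp_eq_coeComplex_exp (φ : ℝ) : qexp φ = (Complex.exp (φ * Complex.I) : ℍ[ℝ]) := by
  rw [Complex.exp_mul_I, ← Complex.ofReal_cos, ← Complex.ofReal_sin, ← coe_add_coe_mul_e1, qexp]

theorem re_coe_mul_e1_add_coeComplex_mul_e2 (r : ℝ) (c : ℂ) :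
    ((r : ℍ[ℝ]) * e1 + (c : ℍ[ℝ]) * e2).re = 0 := by
  simp only [re_add, re_mul]
  simp [e1, e2]

theorem imK_coe_mul_e1_add_coeComplex_mul_e2 (r : ℝ) (c : ℂ) :
    ((r : ℍ[ℝ]) * e1 + (c : ℍ[ℝ]) * e2).imK = c.im := by
  simp only [imK_add, imK_mul]
  simp [e1, e2]

theorem coeComplex_mul_mul_star {u : ℂ} (hu : Complex.normSq u = 1) (r : ℝ) (z : ℂ) :
    (u : ℍ[ℝ]) * ((r : ℍ[ℝ]) * e1 + z * e2) * star (u : ℍ[ℝ]) =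
      (r : ℍ[ℝ]) * e1 + (u ^ 2 * z : ℂ) * e2 := by
  have hu' : u * conj u = 1 := by rw [Complex.mul_conj, hu, Complex.ofReal_one]
  have h_e1 : (u : ℍ[ℝ]) * ((r : ℍ[ℝ]) * e1) * ((conj u : ℂ) : ℍ[ℝ]) = (r : ℍ[ℝ]) * e1 := by
    rw [e1_eq_coeComplex_I, ← coeComplex_coe, ← coeComplex_mul, ← coeComplex_mul,
      ← coeComplex_mul]
    congr 1
    linear_combination (r * Complex.I) * hu'
  have h_e2 : (u : ℍ[ℝ]) * (z * e2) * ((conj u : ℂ) : ℍ[ℝ]) = (u ^ 2 * z : ℂ) * e2 := by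
    rw [mul_assoc, mul_assoc, e2_mul_coeComplex, Complex.conj_conj, ← mul_assoc, ← mul_assoc,
      ← coeComplex_mul, ← coeComplex_mul]
    ring_nf
  rw [star_coeComplex, mul_add, add_mul, h_e1, h_e2]

end Quaternion

theorem stmt_3 (φ ω1 ω2 ω3 : ℝ)
    (k : ℍ[ℝ]) (hk : k = qexp φ)
    (w : ℍ[ℝ])
    (hw : w = ((ω1 : ℝ) : ℍ[ℝ]) * e1 + ((ω2 : ℝ) : ℍ[ℝ]) * e2 + ((ω3 : ℝ) : ℍ[ℝ]) * e3) :
    e3 * (k * w * star k) * e3 = k * w * star k ↔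
      k ^ 4 * (((ω2 : ℝ) : ℍ[ℝ]) + ((ω3 : ℝ) : ℍ[ℝ]) * e1) =
        ((ω2 : ℝ) : ℍ[ℝ]) - ((ω3 : ℝ) : ℍ[ℝ]) * e1 := by
  set u := Complex.exp (φ * Complex.I)
  set z : ℂ := ω2 + ω3 * Complex.I
  have hu : Complex.normSq u = 1 := by
    rw [Complex.normSq_eq_norm_sq, Complex.norm_exp_ofReal_mul_I, one_pow]
  have hw' : w = (ω1 : ℍ[ℝ]) * e1 + (z : ℍ[ℝ]) * e2 := by
    rw [hw, add_assoc, ← coe_add_coe_mul_e1, add_mul, mul_assoc, e1_mul_e2]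
  have hz : (ω2 : ℍ[ℝ]) - (ω3 : ℍ[ℝ]) * e1 = (conj z : ℂ) := by
    rw [sub_eq_add_neg, ← neg_mul, ← coe_neg, coe_add_coe_mul_e1]
    simp [z]
  rw [hk, hw', qexp_eq_coeComplex_exp, coeComplex_mul_mul_star hu, e3_mul_mul_e3_eq_self_iff,
    re_coe_mul_e1_add_coeComplex_mul_e2, imK_coe_mul_e1_add_coeComplex_mul_e2,
    coe_add_coe_mul_e1, hz, ← coeComplex_pow, ← coeComplex_mul, coeComplex_injective.eq_iff,
    ← Complex.im_sq_mul_eq_zero_iff hu]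
  exact and_iff_right rfl
end

section
/- Rotation symmetry of the qubit control system: let η ∈ ℝ and let q : ℝ → ℍ, q(t) = q0(t) + q1(t) e1 + q2(t) e2 + q3(t) e3, be a differentiable solution of q'(t) = (u1(t) e1 + u2(t) e2) · q(t) on an interval I. Then the curve t ↦ q0(t) + (cos η · q1(t) − sin η · q2(t)) e1 + (sin η · q1(t) + cos η · q2(t)) e2 + q3(t) e3 is a solution of the same equation on I with controls ũ1(t) = cos η · u1(t) − sin η · u2(t) and ũ2(t) = sin η · u1(t) + cos η · u2(t). -/
open Quaternion Set

/-!
The rotation by `η` of the `(e1, e2)`-plane that fixes `1` and `e3` is conjugation by the unit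
quaternion `cos (η / 2) + sin (η / 2) e3`, hence an `ℝ`-algebra automorphism `R` of `ℍ`.
Being linear, `R` commutes with `d/dt`; being multiplicative, it sends `u q` to `R u · R q`.
-/

theorem HasDerivAt.algHom_comp_mul {A B : Type*} [NormedRing A] [NormedAlgebra ℝ A]
    [FiniteDimensional ℝ A] [NormedRing B] [NormedAlgebra ℝ B] (φ : A →ₐ[ℝ] B)
    {q : ℝ → A} {u : A} {t : ℝ} (hq : HasDerivAt q (u * q t) t) :
    HasDerivAt (fun s => φ (q s)) (φ u * φ (q t)) t := by
  have h := (LinearMap.toContinuousLinearMap φ.toLinearMap).hasFDerivAt.comp_hasDerivAt t hq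
  rwa [LinearMap.coe_toContinuousLinearMap', AlgHom.toLinearMap_apply, map_mul] at h

noncomputable def rotorE3 (η : ℝ) : unitary ℍ[ℝ] :=
  ⟨(Real.cos (η / 2) : ℍ[ℝ]) + (Real.sin (η / 2) : ℍ[ℝ]) * e3, Unitary.mem_iff.2 (by
    have h := Real.sin_sq_add_cos_sq (η / 2)
    constructor <;> ext <;>
      simp [Quaternion.re_mul, Quaternion.imI_mul, Quaternion.imJ_mul, Quaternion.imK_mul] <;>
      simp [e3] <;> linarith)⟩

noncomputable def rotationE3 (η : ℝ) : ℍ[ℝ] →ₐ[ℝ] ℍ[ℝ] :=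
  (Unitary.conjStarAlgAut ℝ ℍ[ℝ] (rotorE3 η)).toAlgEquiv.toAlgHom

theorem rotationE3_apply (η a b c d : ℝ) :
    rotationE3 η ((a : ℍ[ℝ]) + (b : ℍ[ℝ]) * e1 + (c : ℍ[ℝ]) * e2 + (d : ℍ[ℝ]) * e3) =
      (a : ℍ[ℝ]) + ((Real.cos η * b - Real.sin η * c : ℝ) : ℍ[ℝ]) * e1 +
        ((Real.sin η * b + Real.cos η * c : ℝ) : ℍ[ℝ]) * e2 + (d : ℍ[ℝ]) * e3 := by
  obtain ⟨θ, rfl⟩ : ∃ θ, η = 2 * θ := ⟨η / 2, by ring⟩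
  have h := Real.sin_sq_add_cos_sq θ
  ext <;>
    simp [rotationE3, rotorE3, Quaternion.re_mul, Quaternion.imI_mul, Quaternion.imJ_mul,
      Quaternion.imK_mul] <;>
    simp [e1, e2, e3, Real.cos_two_mul, Real.sin_two_mul]
  · linear_combination a * h
  · linear_combination (-b) * h
  · linear_combination (-c) * h
  · linear_combination d * h

theorem stmt_6_general
    (η : ℝ) (I : Set ℝ)
    (q0 q1 q2 q3 u1 u2 : ℝ → ℝ)
    (q : ℝ → ℍ[ℝ])
    (hqdef : ∀ t, q t =
      ((q0 t : ℝ) : ℍ[ℝ]) + ((q1 t : ℝ) : ℍ[ℝ]) * e1 +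
        ((q2 t : ℝ) : ℍ[ℝ]) * e2 + ((q3 t : ℝ) : ℍ[ℝ]) * e3)
    (hq : ∀ t ∈ I,
      HasDerivAt q ((((u1 t : ℝ) : ℍ[ℝ]) * e1 + ((u2 t : ℝ) : ℍ[ℝ]) * e2) * q t) t) :
    ∀ t ∈ I,
      HasDerivAt
        (fun s => ((q0 s : ℝ) : ℍ[ℝ]) +
          (((Real.cos η * q1 s - Real.sin η * q2 s) : ℝ) : ℍ[ℝ]) * e1 +
          (((Real.sin η * q1 s + Real.cos η * q2 s) : ℝ) : ℍ[ℝ]) * e2 +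
          ((q3 s : ℝ) : ℍ[ℝ]) * e3)
        (((((Real.cos η * u1 t - Real.sin η * u2 t) : ℝ) : ℍ[ℝ]) * e1 +
          (((Real.sin η * u1 t + Real.cos η * u2 t) : ℝ) : ℍ[ℝ]) * e2) *
          (((q0 t : ℝ) : ℍ[ℝ]) +
            (((Real.cos η * q1 t - Real.sin η * q2 t) : ℝ) : ℍ[ℝ]) * e1 +
            (((Real.sin η * q1 t + Real.cos η * q2 t) : ℝ) : ℍ[ℝ]) * e2 +
            ((q3 t : ℝ) : ℍ[ℝ]) * e3)) t := by
  intro t ht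
  have hrot_q : ∀ s, rotationE3 η (q s) = ((q0 s : ℝ) : ℍ[ℝ]) +
      (((Real.cos η * q1 s - Real.sin η * q2 s) : ℝ) : ℍ[ℝ]) * e1 +
      (((Real.sin η * q1 s + Real.cos η * q2 s) : ℝ) : ℍ[ℝ]) * e2 +
      ((q3 s : ℝ) : ℍ[ℝ]) * e3 := fun s => by
    rw [hqdef, rotationE3_apply]
  have hrot_u : rotationE3 η (((u1 t : ℝ) : ℍ[ℝ]) * e1 + ((u2 t : ℝ) : ℍ[ℝ]) * e2) =
      (((Real.cos η * u1 t - Real.sin η * u2 t) : ℝ) : ℍ[ℝ]) * e1 +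
        (((Real.sin η * u1 t + Real.cos η * u2 t) : ℝ) : ℍ[ℝ]) * e2 := by
    simpa using rotationE3_apply η 0 (u1 t) (u2 t) 0
  have h := (hq t ht).algHom_comp_mul (rotationE3 η)
  rwa [hrot_u, hrot_q, funext hrot_q] at h

theorem stmt_6
    (η : ℝ) (I : Set ℝ) (hI : I.OrdConnected)
    (q0 q1 q2 q3 u1 u2 : ℝ → ℝ)
    (q : ℝ → ℍ[ℝ])
    (hqdef : ∀ t, q t =
      ((q0 t : ℝ) : ℍ[ℝ]) + ((q1 t : ℝ) : ℍ[ℝ]) * e1 +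
        ((q2 t : ℝ) : ℍ[ℝ]) * e2 + ((q3 t : ℝ) : ℍ[ℝ]) * e3)
    (hq : ∀ t ∈ I,
      HasDerivAt q ((((u1 t : ℝ) : ℍ[ℝ]) * e1 + ((u2 t : ℝ) : ℍ[ℝ]) * e2) * q t) t) :
    ∀ t ∈ I,
      HasDerivAt
        (fun s => ((q0 s : ℝ) : ℍ[ℝ]) +
          (((Real.cos η * q1 s - Real.sin η * q2 s) : ℝ) : ℍ[ℝ]) * e1 +
          (((Real.sin η * q1 s + Real.cos η * q2 s) : ℝ) : ℍ[ℝ]) * e2 +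
          ((q3 s : ℝ) : ℍ[ℝ]) * e3)
        (((((Real.cos η * u1 t - Real.sin η * u2 t) : ℝ) : ℍ[ℝ]) * e1 +
          (((Real.sin η * u1 t + Real.cos η * u2 t) : ℝ) : ℍ[ℝ]) * e2) *
          (((q0 t : ℝ) : ℍ[ℝ]) +
            (((Real.cos η * q1 t - Real.sin η * q2 t) : ℝ) : ℍ[ℝ]) * e1 +
            (((Real.sin η * q1 t + Real.cos η * q2 t) : ℝ) : ℍ[ℝ]) * e2 +
            ((q3 t : ℝ) : ℍ[ℝ]) * e3)) t :=
  stmt_6_general η I q0 q1 q2 q3 u1 u2 q hqdef hq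
end

section
/- Let α, β : ℝ → ℝ be differentiable and define Y(t) = cos α(t) + sin α(t) · (cos β(t) · e2 + sin β(t) · e3). Then Y'(t)·Y(t)* = ω1(t) e1 + ω2(t) e2 + ω3(t) e3 where ω1 = β' · sin²α, ω2 = α'·cos β − β'·sin α·cos α·sin β, and ω3 = α'·sin β + β'·sin α·cos α·cos β; equivalently, as complex numbers, ω2 − i ω3 = exp(−i β)·(α' − i β'·sin α·cos α). -/
open Quaternion Set

/-!
`Y = polarQuat α β` has coordinates `(cos α, 0, sin α cos β, sin α sin β)`, so its derivative is
computed coordinatewise; multiplying out `Y' Y*` and using `sin² + cos² = 1` in both angles gives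
`ω`. In the complex form, `(ω₂, ω₃)` is `(α', β' sin α cos α)` rotated by the angle `β`.
-/

-- Without `F := ℍ[ℝ]` the anonymous constructors are typed as `QuaternionAlgebra`, which carries
-- no normed structure.
theorem Quaternion.hasDerivAt_mk {a b c d : ℝ → ℝ} {a' b' c' d' t : ℝ} (ha : HasDerivAt a a' t)
    (hb : HasDerivAt b b' t) (hc : HasDerivAt c c' t) (hd : HasDerivAt d d' t) :
    HasDerivAt (F := ℍ[ℝ]) (fun s => ⟨a s, b s, c s, d s⟩) ⟨a', b', c', d'⟩ t := by
  have h := (((ha.smul_const 1).add (hb.smul_const e1)).add (hc.smul_const e2)).add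
    (hd.smul_const e3)
  refine (h.congr_deriv ?_).congr_of_eventuallyEq (.of_forall fun s => ?_) <;> ext <;>
    simp only [Pi.add_apply, re_add, imI_add, imJ_add, imK_add, re_smul, imI_smul, imJ_smul,
      imK_smul, re_one, imI_one, imJ_one, imK_one, smul_eq_mul, mul_one, mul_zero, zero_add] <;>
    simp [e1, e2, e3]

theorem coe_mul_e1_add_coe_mul_e2_add_coe_mul_e3 (x y z : ℝ) :
    (x : ℍ[ℝ]) * e1 + (y : ℍ[ℝ]) * e2 + (z : ℍ[ℝ]) * e3 = ⟨0, x, y, z⟩ := by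
  ext <;>
    simp only [coe_mul_eq_smul, re_add, imI_add, imJ_add, imK_add, re_smul, imI_smul, imJ_smul,
      imK_smul, smul_eq_mul] <;>
    simp [e1, e2, e3]

open Real

noncomputable def polarQuat (a b : ℝ) : ℍ[ℝ] := ⟨cos a, 0, sin a * cos b, sin a * sin b⟩

noncomputable def polarQuatDeriv (a b a' b' : ℝ) : ℍ[ℝ] :=
  ⟨-sin a * a', 0, cos a * cos b * a' - sin a * sin b * b', cos a * sin b * a' + sin a * cos b * b'⟩

theorem coe_add_coe_mul_eq_polarQuat (a b : ℝ) :
    (cos a : ℍ[ℝ]) + (sin a : ℍ[ℝ]) * ((cos b : ℍ[ℝ]) * e2 + (sin b : ℍ[ℝ]) * e3) =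
      polarQuat a b := by
  ext <;>
    simp only [coe_mul_eq_smul, smul_add, re_add, imI_add, imJ_add, imK_add, re_coe, imI_coe,
      imJ_coe, imK_coe, re_smul, imI_smul, imJ_smul, imK_smul, smul_eq_mul, zero_add] <;>
    simp [polarQuat, e2, e3]

theorem hasDerivAt_polarQuat {α β : ℝ → ℝ} {a' b' t : ℝ} (hα : HasDerivAt α a' t)
    (hβ : HasDerivAt β b' t) :
    HasDerivAt (fun s => polarQuat (α s) (β s)) (polarQuatDeriv (α t) (β t) a' b') t := by
  refine (Quaternion.hasDerivAt_mk hα.cos (hasDerivAt_const t 0) (hα.sin.mul hβ.cos)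
    (hα.sin.mul hβ.sin)).congr_deriv ?_
  ext <;> simp only [polarQuatDeriv] <;> ring

theorem polarQuatDeriv_mul_star_polarQuat (a b a' b' : ℝ) :
    polarQuatDeriv a b a' b' * star (polarQuat a b) =
      ⟨0, b' * sin a ^ 2, a' * cos b - b' * sin a * cos a * sin b,
        a' * sin b + b' * sin a * cos a * cos b⟩ := by
  have ha := sin_sq_add_cos_sq a
  have hb := sin_sq_add_cos_sq b
  ext <;>
    simp only [re_mul, imI_mul, imJ_mul, imK_mul, re_star, imI_star, imJ_star, imK_star] <;>
    simp only [polarQuatDeriv, polarQuat]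
  · linear_combination sin a * cos a * a' * hb
  · linear_combination b' * sin a ^ 2 * hb
  · linear_combination a' * cos b * ha
  · linear_combination a' * sin b * ha

theorem Complex.ofReal_sub_I_mul_ofReal_eq_exp_mul (x y θ : ℝ) :
    ((x * Real.cos θ - y * Real.sin θ : ℝ) : ℂ) - I * ((x * Real.sin θ + y * Real.cos θ : ℝ) : ℂ) =
      exp (-(θ : ℂ) * I) * ((x : ℂ) - I * (y : ℂ)) := by
  rw [exp_mul_I, cos_neg, sin_neg]
  push_cast
  linear_combination (-(y : ℂ) * sin θ) * I_sq

theorem stmt_10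
    (α β α' β' : ℝ → ℝ)
    (hα : ∀ t, HasDerivAt α (α' t) t)
    (hβ : ∀ t, HasDerivAt β (β' t) t)
    (Y : ℝ → ℍ[ℝ])
    (hYdef : ∀ t, Y t =
      ((Real.cos (α t) : ℝ) : ℍ[ℝ]) +
        ((Real.sin (α t) : ℝ) : ℍ[ℝ]) *
          (((Real.cos (β t) : ℝ) : ℍ[ℝ]) * e2 + ((Real.sin (β t) : ℝ) : ℍ[ℝ]) * e3)) :
    ∀ t : ℝ,
      deriv Y t * star (Y t) =
        (((β' t * Real.sin (α t) ^ 2 : ℝ)) : ℍ[ℝ]) * e1 +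
        (((α' t * Real.cos (β t) - β' t * Real.sin (α t) * Real.cos (α t) * Real.sin (β t)
          : ℝ)) : ℍ[ℝ]) * e2 +
        (((α' t * Real.sin (β t) + β' t * Real.sin (α t) * Real.cos (α t) * Real.cos (β t)
          : ℝ)) : ℍ[ℝ]) * e3 ∧
      ((α' t * Real.cos (β t) - β' t * Real.sin (α t) * Real.cos (α t) * Real.sin (β t)
          : ℝ) : ℂ) -
        Complex.I * ((α' t * Real.sin (β t) +
          β' t * Real.sin (α t) * Real.cos (α t) * Real.cos (β t) : ℝ) : ℂ) =
      Complex.exp (-(β t : ℂ) * Complex.I) *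
        (((α' t : ℝ) : ℂ) -
          Complex.I * ((β' t * Real.sin (α t) * Real.cos (α t) : ℝ) : ℂ)) := by
  have hY : Y = fun s => polarQuat (α s) (β s) :=
    funext fun s => (hYdef s).trans (coe_add_coe_mul_eq_polarQuat _ _)
  intro t
  refine ⟨?_, Complex.ofReal_sub_I_mul_ofReal_eq_exp_mul _ _ _⟩
  rw [hY, (hasDerivAt_polarQuat (hα t) (hβ t)).deriv, polarQuatDeriv_mul_star_polarQuat,
    coe_mul_e1_add_coe_mul_e2_add_coe_mul_e3]
end

section
/- Let ᾱ ∈ (0, π] and β̄ ∈ [−π/2, π/2], and set λ̄ = −ᾱ/2 if ᾱ ∈ [π/4, 3π/4] and λ̄ = π/4 − ᾱ/2 otherwise. Then sin λ̄ · cos λ̄ ≠ 0 and sin(λ̄ + ᾱ) · cos(λ̄ + ᾱ) ≠ 0. Moreover, if α, β : ℝ → ℝ are differentiable with α(0) = λ̄, α(1) = λ̄ + ᾱ, α'(0) = α'(1) = ᾱ·cos β̄, β(0) = β(1) = β̄, β'(0) = −ᾱ·sin β̄/(sin λ̄·cos λ̄), and β'(1) = −ᾱ·sin β̄/(sin(λ̄+ᾱ)·cos(λ̄+ᾱ)),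 then the complex-valued function z(s) = exp(−i β(s))·(α'(s) − i β'(s)·sin α(s)·cos α(s)) satisfies z(0) = z(1) = ᾱ. -/
open Set Real

/- Both claims about `sin · cos` hold because `sin x * cos x = sin (2x) / 2` vanishes only at
multiples of `π/2`, and the choice of `λ̄` keeps `λ̄` and `λ̄ + ᾱ` strictly inside quarter-turns.
At the endpoints, `β' · sin α · cos α = -ᾱ sin β̄`, so the bracket defining `z` equals
`ᾱ (cos β̄ + i sin β̄) = ᾱ e^{iβ̄}`, which the factor `e^{-iβ̄}` turns into `ᾱ`. -/

theorem Real.sin_mul_cos_ne_zero_of_lt_of_lt {x : ℝ} (k : ℤ)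
    (hlo : k * (π / 2) < x) (hhi : x < (k + 1) * (π / 2)) : sin x * cos x ≠ 0 := by
  have hsin : sin (2 * x) ≠ 0 := by
    refine sin_ne_zero_iff.mpr fun n hn => ?_
    have hk : (k : ℝ) < n := by nlinarith [pi_pos]
    have hk' : (n : ℝ) < k + 1 := by nlinarith [pi_pos]
    norm_cast at hk hk'
    omega
  intro h
  exact hsin (by rw [sin_two_mul, mul_assoc, h, mul_zero])

theorem sin_mul_cos_ne_zero_of_startAngle {αb lamb : ℝ} (hαb : αb ∈ Ioc 0 π)
    (hlamb : lamb = if αb ∈ Icc (π / 4) (3 * π / 4) then -αb / 2 else π / 4 - αb / 2) :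
    sin lamb * cos lamb ≠ 0 ∧ sin (lamb + αb) * cos (lamb + αb) ≠ 0 := by
  obtain ⟨hpos, hle⟩ := hαb
  split_ifs at hlamb with hmid
  · obtain ⟨hlo, hhi⟩ := hmid
    exact ⟨sin_mul_cos_ne_zero_of_lt_of_lt (-1) (by push_cast; linarith) (by push_cast; linarith),
      sin_mul_cos_ne_zero_of_lt_of_lt 0 (by push_cast; linarith) (by push_cast; linarith)⟩
  · rcases not_and_or.mp (mem_Icc.not.mp hmid) with hsmall | hlarge
    · exact ⟨sin_mul_cos_ne_zero_of_lt_of_lt 0 (by push_cast; linarith) (by push_cast; linarith),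
        sin_mul_cos_ne_zero_of_lt_of_lt 0 (by push_cast; linarith) (by push_cast; linarith)⟩
    · exact ⟨sin_mul_cos_ne_zero_of_lt_of_lt (-1) (by push_cast; linarith) (by push_cast; linarith),
        sin_mul_cos_ne_zero_of_lt_of_lt 1 (by push_cast; linarith) (by push_cast; linarith)⟩

theorem Complex.exp_neg_mul_I_mul_polar (a b : ℝ) :
    exp (-(b : ℂ) * I) * (((a * Real.cos b : ℝ) : ℂ) - I * ((-(a * Real.sin b) : ℝ) : ℂ)) = a := by
  have hpolar : ((a * Real.cos b : ℝ) : ℂ) - I * ((-(a * Real.sin b) : ℝ) : ℂ)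
      = a * exp (b * I) := by
    rw [exp_mul_I, ← ofReal_cos, ← ofReal_sin]
    push_cast
    ring
  rw [hpolar, mul_left_comm, ← exp_add]
  simp

theorem stmt_12_general
    (αb βb lamb : ℝ)
    (hαb : αb ∈ Ioc (0:ℝ) Real.pi)
    (hlamb : lamb = if αb ∈ Icc (Real.pi/4) (3 * Real.pi/4) then -αb/2 else Real.pi/4 - αb/2)
    (α β α' β' : ℝ → ℝ)
    (hα0 : α 0 = lamb) (hα1 : α 1 = lamb + αb)
    (hα'0 : α' 0 = αb * Real.cos βb) (hα'1 : α' 1 = αb * Real.cos βb)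
    (hβ0 : β 0 = βb) (hβ1 : β 1 = βb)
    (hβ'0 : β' 0 = -(αb * Real.sin βb) / (Real.sin lamb * Real.cos lamb))
    (hβ'1 : β' 1 = -(αb * Real.sin βb) / (Real.sin (lamb + αb) * Real.cos (lamb + αb)))
    (z : ℝ → ℂ)
    (hz : ∀ s, z s = Complex.exp (-(β s : ℂ) * Complex.I) *
      (((α' s : ℝ) : ℂ) -
        Complex.I * ((β' s * Real.sin (α s) * Real.cos (α s) : ℝ) : ℂ))) :
    Real.sin lamb * Real.cos lamb ≠ 0 ∧
      Real.sin (lamb + αb) * Real.cos (lamb + αb) ≠ 0 ∧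
      z 0 = (αb : ℂ) ∧ z 1 = (αb : ℂ) := by
  obtain ⟨h0, h1⟩ := sin_mul_cos_ne_zero_of_startAngle hαb hlamb
  have hz_eq : ∀ s, β s = βb → α' s = αb * cos βb →
      β' s * sin (α s) * cos (α s) = -(αb * sin βb) → z s = αb := by
    intro s hβs hα's hβ's
    rw [hz, hβs, hα's, hβ's]
    exact Complex.exp_neg_mul_I_mul_polar αb βb
  refine ⟨h0, h1, hz_eq 0 hβ0 hα'0 ?_, hz_eq 1 hβ1 hα'1 ?_⟩
  · rw [hβ'0, hα0, mul_assoc, div_mul_cancel₀ _ h0]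
  · rw [hβ'1, hα1, mul_assoc, div_mul_cancel₀ _ h1]

theorem stmt_12
    (αb βb lamb : ℝ)
    (hαb : αb ∈ Ioc (0:ℝ) Real.pi)
    (hβb : βb ∈ Icc (-(Real.pi/2)) (Real.pi/2))
    (hlamb : lamb = if αb ∈ Icc (Real.pi/4) (3 * Real.pi/4) then -αb/2 else Real.pi/4 - αb/2)
    (α β α' β' : ℝ → ℝ)
    (hα : ∀ s, HasDerivAt α (α' s) s)
    (hβ : ∀ s, HasDerivAt β (β' s) s)
    (hα0 : α 0 = lamb) (hα1 : α 1 = lamb + αb)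
    (hα'0 : α' 0 = αb * Real.cos βb) (hα'1 : α' 1 = αb * Real.cos βb)
    (hβ0 : β 0 = βb) (hβ1 : β 1 = βb)
    (hβ'0 : β' 0 = -(αb * Real.sin βb) / (Real.sin lamb * Real.cos lamb))
    (hβ'1 : β' 1 = -(αb * Real.sin βb) / (Real.sin (lamb + αb) * Real.cos (lamb + αb)))
    (z : ℝ → ℂ)
    (hz : ∀ s, z s = Complex.exp (-(β s : ℂ) * Complex.I) *
      (((α' s : ℝ) : ℂ) -
        Complex.I * ((β' s * Real.sin (α s) * Real.cos (α s) : ℝ) : ℂ))) :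
    Real.sin lamb * Real.cos lamb ≠ 0 ∧
      Real.sin (lamb + αb) * Real.cos (lamb + αb) ≠ 0 ∧
      z 0 = (αb : ℂ) ∧ z 1 = (αb : ℂ) :=
  stmt_12_general αb βb lamb hαb hlamb α β α' β' hα0 hα1 hα'0 hα'1 hβ0 hβ1 hβ'0 hβ'1 z hz
end

section
/- Explicit steering in the normalized time scale: let ᾱ ∈ (0, π] and β̄ ∈ [−π/2, π/2], set λ̄ = −ᾱ/2 if ᾱ ∈ [π/4, 3π/4] and λ̄ = π/4 − ᾱ/2 otherwise, and let α and β be the unique real polynomials of degree ≤ 3 satisfying α(0) = λ̄, α(1) = λ̄ + ᾱ, α'(0) = α'(1) = ᾱ·cos β̄, β(0) = β(1) = β̄, β'(0) = −ᾱ·sin β̄/(sin λ̄·cos λ̄), β'(1) = −ᾱ·sin β̄/(sin(λ̄+ᾱ)·cos(λ̄+ᾱ)). Set Y(s) = cos α(s) + sin α(s)·(cos β(s)·e2 + sin β(s)·e3) and let ω1, ω2, ω3 : [0,1] → ℝ be the functions with Y'(s)·Y(s)* = ω1(s) e1 + ω2(s) e2 + ω3(s) e3. Define the controls u1 = ω1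 + (ω3·ω2' − ω2·ω3')/(2(ω2² + ω3²)) and u2 = √(ω2² + ω3²) on [0,1]. Then ω2² + ω3² > 0 on [0,1], and the solution q : [0,1] → ℍ of q'(s) = (u1(s) e1 + u2(s) e2)·q(s) with q(0) = 1 satisfies q(1) = cos ᾱ + sin ᾱ·(cos β̄·e2 + sin β̄·e3). -/
open Quaternion Set

set_option maxHeartbeats 4000000

@[simp] lemma e1_re : e1.re = 0 := rfl
@[simp] lemma e1_imI : e1.imI = 1 := rfl
@[simp] lemma e1_imJ : e1.imJ = 0 := rfl
@[simp] lemma e1_imK : e1.imK = 0 := rfl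
@[simp] lemma e2_re : e2.re = 0 := rfl
@[simp] lemma e2_imI : e2.imI = 0 := rfl
@[simp] lemma e2_imJ : e2.imJ = 1 := rfl
@[simp] lemma e2_imK : e2.imK = 0 := rfl
@[simp] lemma e3_re : e3.re = 0 := rfl
@[simp] lemma e3_imI : e3.imI = 0 := rfl
@[simp] lemma e3_imJ : e3.imJ = 0 := rfl
@[simp] lemma e3_imK : e3.imK = 1 := rfl

lemma cubic_hasDerivAt (a b c d s : ℝ) :
    HasDerivAt (fun x : ℝ => a*x^3+b*x^2+c*x+d) (3*a*s^2+2*b*s+c) s := by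
  have h := (((hasDerivAt_pow 3 s).const_mul a).add ((hasDerivAt_pow 2 s).const_mul b)).add
    (((hasDerivAt_id s).const_mul c).add (hasDerivAt_const s d))
  refine (h.congr_of_eventuallyEq (Filter.Eventually.of_forall fun x => ?_)).congr_deriv ?_
  · simp [id]; ring
  · push_cast; ring

lemma quadratic_hasDerivAt (a b c s : ℝ) :
    HasDerivAt (fun x : ℝ => a*x^2+b*x+c) (2*a*s+b) s := by
  have h := ((hasDerivAt_pow 2 s).const_mul a).add
    (((hasDerivAt_id s).const_mul b).add (hasDerivAt_const s c))
  refine (h.congr_of_eventuallyEq (Filter.Eventually.of_forall fun x => ?_)).congr_deriv ?_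
  · simp [id]; ring
  · push_cast; ring

lemma const_on_Icc {E : Type*} [NormedAddCommGroup E] [NormedSpace ℝ E] {f : ℝ → E}
    (hc : ContinuousOn f (Icc 0 1)) (hd : ∀ s ∈ Ioo (0:ℝ) 1, HasDerivAt f 0 s) :
    ∀ s ∈ Icc (0:ℝ) 1, f s = f 0 := by
  have key : ∀ a ∈ Ioo (0:ℝ) 1, ∀ x ∈ Icc a 1, f x = f a := by
    intro a ha x hx
    refine constant_of_has_deriv_right_zero (hc.mono (Icc_subset_Icc ha.1.le le_rfl)) ?_ x hx
    intro y hy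
    exact (hd y ⟨lt_of_lt_of_le ha.1 hy.1, hy.2⟩).hasDerivWithinAt
  have hIoo : ∀ s ∈ Ioo (0:ℝ) 1, f s = f (1/2) := by
    intro s hs
    rcases le_total s (1/2) with h | h
    · exact (key s hs (1/2) ⟨h, by norm_num⟩).symm
    · exact key (1/2) (by norm_num) s ⟨h, hs.2.le⟩
  have h0 : f 0 = f (1/2) := by
    have hne : (nhdsWithin (0:ℝ) (Ioo 0 1)).NeBot := by
      rw [← mem_closure_iff_nhdsWithin_neBot, closure_Ioo (by norm_num : (0:ℝ) ≠ 1)]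
      exact ⟨le_rfl, by norm_num⟩
    have t1 : Filter.Tendsto f (nhdsWithin 0 (Ioo 0 1)) (nhds (f 0)) :=
      (hc 0 ⟨le_rfl, by norm_num⟩).mono_left (nhdsWithin_mono 0 Ioo_subset_Icc_self)
    have t2 : Filter.Tendsto f (nhdsWithin 0 (Ioo 0 1)) (nhds (f (1/2))) := by
      refine Filter.Tendsto.congr' ?_ tendsto_const_nhds
      filter_upwards [self_mem_nhdsWithin] with s hs
      exact (hIoo s hs).symm
    exact tendsto_nhds_unique t1 t2
  intro s hs
  rcases eq_or_lt_of_le hs.1 with h | h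
  · rw [← h]
  rcases eq_or_lt_of_le hs.2 with h2 | h2
  · rw [h2, key (1/2) (by norm_num) 1 (by norm_num), ← h0]
  · rw [hIoo s ⟨h, h2⟩, ← h0]

lemma ode_trick {x y g c : ℝ → ℝ}
    (hx : ContinuousOn x (Icc 0 1)) (hy : ContinuousOn y (Icc 0 1)) (hc : ContinuousOn c (Icc 0 1))
    (hdx : ∀ s ∈ Ioo (0:ℝ) 1, HasDerivAt x (-(g s) * y s) s)
    (hdy : ∀ s ∈ Ioo (0:ℝ) 1, HasDerivAt y (g s * x s) s)
    (hdc : ∀ s ∈ Ioo (0:ℝ) 1, HasDerivAt c (g s) s)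
    (hx0 : x 0 = Real.cos (c 0)) (hy0 : y 0 = Real.sin (c 0)) :
    ∀ s ∈ Icc (0:ℝ) 1, x s = Real.cos (c s) ∧ y s = Real.sin (c s) := by
  set h : ℝ → ℝ := fun s => x s * Real.cos (c s) + y s * Real.sin (c s) with hh
  set k : ℝ → ℝ := fun s => -(x s) * Real.sin (c s) + y s * Real.cos (c s) with hk
  have hcos : ContinuousOn (fun s => Real.cos (c s)) (Icc 0 1) := Real.continuous_cos.comp_continuousOn hc
  have hsin : ContinuousOn (fun s => Real.sin (c s)) (Icc 0 1) := Real.continuous_sin.comp_continuousOn hc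
  have hch : ContinuousOn h (Icc 0 1) := (hx.mul hcos).add (hy.mul hsin)
  have hck : ContinuousOn k (Icc 0 1) := ((hx.neg).mul hsin).add (hy.mul hcos)
  have hdcos : ∀ s ∈ Ioo (0:ℝ) 1, HasDerivAt (fun s => Real.cos (c s)) (-Real.sin (c s) * g s) s := by
    intro s hs
    simpa [Function.comp_def] using (Real.hasDerivAt_cos (c s)).comp s (hdc s hs)
  have hdsin : ∀ s ∈ Ioo (0:ℝ) 1, HasDerivAt (fun s => Real.sin (c s)) (Real.cos (c s) * g s) s := by
    intro s hs
    simpa [Function.comp_def] using (Real.hasDerivAt_sin (c s)).comp s (hdc s hs)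
  have hdh : ∀ s ∈ Ioo (0:ℝ) 1, HasDerivAt h 0 s := by
    intro s hs
    have := ((hdx s hs).mul (hdcos s hs)).add ((hdy s hs).mul (hdsin s hs))
    exact this.congr_deriv (by ring)
  have hdk : ∀ s ∈ Ioo (0:ℝ) 1, HasDerivAt k 0 s := by
    intro s hs
    have := (((hdx s hs).neg).mul (hdsin s hs)).add ((hdy s hs).mul (hdcos s hs))
    exact this.congr_deriv (by simp only [Pi.neg_apply]; ring)
  have hH : ∀ s ∈ Icc (0:ℝ) 1, h s = 1 := by
    intro s hs
    rw [const_on_Icc hch hdh s hs]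
    simp only [hh, hx0, hy0]
    linear_combination Real.cos_sq_add_sin_sq (c 0)
  have hK : ∀ s ∈ Icc (0:ℝ) 1, k s = 0 := by
    intro s hs
    rw [const_on_Icc hck hdk s hs]
    simp only [hk, hx0, hy0]
    ring
  intro s hs
  have h1 := hH s hs
  have h2 := hK s hs
  simp only [hh, hk] at h1 h2
  have pyth := Real.sin_sq_add_cos_sq (c s)
  constructor
  · linear_combination Real.cos (c s) * h1 - Real.sin (c s) * h2 - x s * pyth
  · linear_combination Real.sin (c s) * h1 + Real.cos (c s) * h2 - y s * pyth

lemma quatY (ca sa cb sb A' B' : ℝ) (ha : sa^2+ca^2 = 1) (hb : sb^2+cb^2 = 1) :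
    (((-sa*A' : ℝ) : ℍ[ℝ]) + ((ca*A' : ℝ) : ℍ[ℝ]) * (((cb:ℝ):ℍ[ℝ])*e2 + ((sb:ℝ):ℍ[ℝ])*e3)
      + ((sa:ℝ):ℍ[ℝ]) * (((-sb*B' : ℝ):ℍ[ℝ])*e2 + ((cb*B' : ℝ):ℍ[ℝ])*e3))
      * star (((ca:ℝ):ℍ[ℝ]) + ((sa:ℝ):ℍ[ℝ]) * (((cb:ℝ):ℍ[ℝ])*e2 + ((sb:ℝ):ℍ[ℝ])*e3))
    = ((B'*(sa*sa) : ℝ):ℍ[ℝ])*e1 + ((A'*cb - B'*sa*ca*sb : ℝ):ℍ[ℝ])*e2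
        + ((A'*sb + B'*sa*ca*cb : ℝ):ℍ[ℝ])*e3 := by
  ext
  · simp; linear_combination (sa*ca*A') * hb
  · simp; linear_combination (sa*sa*B') * hb
  · simp; linear_combination (A'*cb) * ha
  · simp; linear_combination (A'*sb) * ha

lemma keyQuat (cp sp σ1 σ2 σ3 g r : ℝ) (hunit : sp^2+cp^2 = 1)
    (h2 : σ2 = r*(cp*cp-sp*sp)) (h3 : σ3 = -(r*(2*cp*sp))) :
    (((-sp*g : ℝ):ℍ[ℝ]) + ((cp*g : ℝ):ℍ[ℝ])*e1)
      + (((cp:ℝ):ℍ[ℝ]) + ((sp:ℝ):ℍ[ℝ])*e1)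
        * (((σ1:ℝ):ℍ[ℝ])*e1 + ((σ2:ℝ):ℍ[ℝ])*e2 + ((σ3:ℝ):ℍ[ℝ])*e3)
    = (((σ1+g : ℝ):ℍ[ℝ])*e1 + ((r:ℝ):ℍ[ℝ])*e2) * (((cp:ℝ):ℍ[ℝ]) + ((sp:ℝ):ℍ[ℝ])*e1) := by
  ext
  · simp; ring
  · simp; ring
  · simp; linear_combination cp*h2 - sp*h3 + (r*cp)*hunit
  · simp; linear_combination cp*h3 + sp*h2 - (r*sp)*hunit

lemma quatUnit (ca sa cb sb : ℝ) (ha : sa^2+ca^2 = 1) (hb : sb^2+cb^2 = 1) :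
    star (((ca:ℝ):ℍ[ℝ]) + ((sa:ℝ):ℍ[ℝ]) * (((cb:ℝ):ℍ[ℝ])*e2 + ((sb:ℝ):ℍ[ℝ])*e3))
      * (((ca:ℝ):ℍ[ℝ]) + ((sa:ℝ):ℍ[ℝ]) * (((cb:ℝ):ℍ[ℝ])*e2 + ((sb:ℝ):ℍ[ℝ])*e3)) = 1 := by
  ext <;> simp <;> nlinarith [ha, hb]

lemma quatUnit' (ca sa cb sb : ℝ) (ha : sa^2+ca^2 = 1) (hb : sb^2+cb^2 = 1) :
    (((ca:ℝ):ℍ[ℝ]) + ((sa:ℝ):ℍ[ℝ]) * (((cb:ℝ):ℍ[ℝ])*e2 + ((sb:ℝ):ℍ[ℝ])*e3))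
      * star (((ca:ℝ):ℍ[ℝ]) + ((sa:ℝ):ℍ[ℝ]) * (((cb:ℝ):ℍ[ℝ])*e2 + ((sb:ℝ):ℍ[ℝ])*e3)) = 1 := by
  ext <;> simp <;> nlinarith [ha, hb]

lemma starA (a b : ℝ) : star (((a:ℝ):ℍ[ℝ])*e1 + ((b:ℝ):ℍ[ℝ])*e2)
    = -(((a:ℝ):ℍ[ℝ])*e1 + ((b:ℝ):ℍ[ℝ])*e2) := by
  ext <;> simp

lemma quatFinal (C1 S1 C0 S0 ca sa cb sb : ℝ) (hb : sb^2+cb^2 = 1)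
    (hcos : ca = C1*C0 + S1*S0) (hsin : sa = S1*C0 - C1*S0) :
    (((C1:ℝ):ℍ[ℝ]) + ((S1:ℝ):ℍ[ℝ]) * (((cb:ℝ):ℍ[ℝ])*e2 + ((sb:ℝ):ℍ[ℝ])*e3))
      * star (((C0:ℝ):ℍ[ℝ]) + ((S0:ℝ):ℍ[ℝ]) * (((cb:ℝ):ℍ[ℝ])*e2 + ((sb:ℝ):ℍ[ℝ])*e3))
    = ((ca:ℝ):ℍ[ℝ]) + ((sa:ℝ):ℍ[ℝ]) * (((cb:ℝ):ℍ[ℝ])*e2 + ((sb:ℝ):ℍ[ℝ])*e3) := by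
  subst hcos hsin
  ext
  · simp; linear_combination (S1*S0) * hb
  · simp; ring
  · simp; ring
  · simp; ring

lemma qcoe_smul (r : ℝ) : r • (1 : ℍ[ℝ]) = (r : ℍ[ℝ]) := by ext <;> simp

lemma hasDerivAt_qcoe {f : ℝ → ℝ} {f' : ℝ} {s : ℝ} (h : HasDerivAt f f' s) :
    HasDerivAt (fun x => ((f x : ℝ) : ℍ[ℝ])) ((f' : ℝ) : ℍ[ℝ]) s := by
  simpa [qcoe_smul] using h.smul_const (1 : ℍ[ℝ])

lemma A1pos_aux (P K s : ℝ) (hP : 0 ≤ P) (hK : 0 ≤ K) (hPK : 0 < P + K)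
    (hs0 : 0 < s) (hs1 : s < 1) : 0 < P + 6*K*(s - s^2) := by
  have hss : 0 < s - s^2 := by nlinarith
  rcases eq_or_lt_of_le hP with hP' | hP'
  · nlinarith
  · nlinarith [mul_nonneg hK hss.le]
lemma deriv_x_aux (s2 s3 d2 d3 rr : ℝ) (hr : rr^2 = s2^2+s3^2) (hrne : rr ≠ 0) :
    (d2 * rr - s2 * ((s2*d2+s3*d3)/rr)) / rr^2
      = -(2*((s3*d2 - s2*d3)/(2*(s2^2+s3^2)))) * (-(s3/rr)) := by
  rw [← hr]
  field_simp
  linear_combination d2 * hr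

lemma deriv_y_aux (s2 s3 d2 d3 rr : ℝ) (hr : rr^2 = s2^2+s3^2) (hrne : rr ≠ 0) :
    -((d3 * rr - s3 * ((s2*d2+s3*d3)/rr)) / rr^2)
      = 2*((s3*d2 - s2*d3)/(2*(s2^2+s3^2))) * (s2/rr) := by
  rw [← hr]
  field_simp
  linear_combination (-d3) * hr
lemma deriv_xt_aux (A1 mm dA1 dm Bp cb sb rr s2 s3 d2 d3 : ℝ) (hpyth : sb^2+cb^2 = 1)
    (hr : rr^2 = A1^2+mm^2) (hrne : rr ≠ 0)
    (hs2 : s2 = A1*cb - mm*sb) (hs3 : s3 = A1*sb + mm*cb)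
    (hd2 : d2 = (dA1*cb + A1*(-sb*Bp)) - (dm*sb + mm*(cb*Bp)))
    (hd3 : d3 = (dA1*sb + A1*(cb*Bp)) + (dm*cb + mm*(-sb*Bp))) :
    (dA1 * rr - A1*((s2*d2+s3*d3)/rr))/rr^2
      = -(2*((s3*d2-s2*d3)/(2*(s2^2+s3^2))) + Bp) * (-(mm/rr)) := by
  have hD : s2^2+s3^2 = rr^2 := by
    rw [hs2, hs3, hr]; linear_combination (A1^2+mm^2) * hpyth
  have hdot : s2*d2+s3*d3 = A1*dA1+mm*dm := by
    rw [hs2, hs3, hd2, hd3]; linear_combination (A1*dA1+mm*dm) * hpyth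
  have hN : s3*d2 - s2*d3 = -(Bp*rr^2) - (A1*dm - mm*dA1) := by
    rw [hs2, hs3, hd2, hd3, hr]
    linear_combination (-(Bp*(A1^2+mm^2)) - (A1*dm - mm*dA1)) * hpyth
  rw [hdot, hN, hD]
  field_simp
  linear_combination dA1 * hr

lemma deriv_yt_aux (A1 mm dA1 dm Bp cb sb rr s2 s3 d2 d3 : ℝ) (hpyth : sb^2+cb^2 = 1)
    (hr : rr^2 = A1^2+mm^2) (hrne : rr ≠ 0)
    (hs2 : s2 = A1*cb - mm*sb) (hs3 : s3 = A1*sb + mm*cb)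
    (hd2 : d2 = (dA1*cb + A1*(-sb*Bp)) - (dm*sb + mm*(cb*Bp)))
    (hd3 : d3 = (dA1*sb + A1*(cb*Bp)) + (dm*cb + mm*(-sb*Bp))) :
    -((dm * rr - mm*((s2*d2+s3*d3)/rr))/rr^2)
      = (2*((s3*d2-s2*d3)/(2*(s2^2+s3^2))) + Bp) * (A1/rr) := by
  have hD : s2^2+s3^2 = rr^2 := by
    rw [hs2, hs3, hr]; linear_combination (A1^2+mm^2) * hpyth
  have hdot : s2*d2+s3*d3 = A1*dA1+mm*dm := by
    rw [hs2, hs3, hd2, hd3]; linear_combination (A1*dA1+mm*dm) * hpyth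
  have hN : s3*d2 - s2*d3 = -(Bp*rr^2) - (A1*dm - mm*dA1) := by
    rw [hs2, hs3, hd2, hd3, hr]
    linear_combination (-(Bp*(A1^2+mm^2)) - (A1*dm - mm*dA1)) * hpyth
  rw [hdot, hN, hD]
  field_simp
  linear_combination (-dm) * hr

instance : StarModule ℝ ℍ[ℝ] := ⟨fun r q => by ext <;> simp⟩

theorem stmt_15
    (αb βb lamb : ℝ)
    (hαb : αb ∈ Ioc (0:ℝ) Real.pi)
    (hβb : βb ∈ Icc (-(Real.pi/2)) (Real.pi/2))
    (hlamb : lamb = if αb ∈ Icc (Real.pi/4) (3 * Real.pi/4) then -αb/2 else Real.pi/4 - αb/2)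
    (α β : ℝ → ℝ)
    (hαpoly : ∃ a b c d : ℝ, ∀ s, α s = a * s ^ 3 + b * s ^ 2 + c * s + d)
    (hβpoly : ∃ a b c d : ℝ, ∀ s, β s = a * s ^ 3 + b * s ^ 2 + c * s + d)
    (hα0 : α 0 = lamb) (hα1 : α 1 = lamb + αb)
    (hα'0 : deriv α 0 = αb * Real.cos βb) (hα'1 : deriv α 1 = αb * Real.cos βb)
    (hβ0 : β 0 = βb) (hβ1 : β 1 = βb)
    (hβ'0 : deriv β 0 = -(αb * Real.sin βb) / (Real.sin lamb * Real.cos lamb))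
    (hβ'1 : deriv β 1 = -(αb * Real.sin βb) / (Real.sin (lamb + αb) * Real.cos (lamb + αb)))
    (Y : ℝ → ℍ[ℝ])
    (hYdef : ∀ s, Y s =
      ((Real.cos (α s) : ℝ) : ℍ[ℝ]) +
        ((Real.sin (α s) : ℝ) : ℍ[ℝ]) *
          (((Real.cos (β s) : ℝ) : ℍ[ℝ]) * e2 + ((Real.sin (β s) : ℝ) : ℍ[ℝ]) * e3))
    (ω1 ω2 ω3 : ℝ → ℝ)
    (hω : ∀ s ∈ Icc (0:ℝ) 1,
      deriv Y s * star (Y s) =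
        ((ω1 s : ℝ) : ℍ[ℝ]) * e1 + ((ω2 s : ℝ) : ℍ[ℝ]) * e2 + ((ω3 s : ℝ) : ℍ[ℝ]) * e3)
    (u1 u2 : ℝ → ℝ)
    (hu1 : ∀ s ∈ Icc (0:ℝ) 1,
      u1 s = ω1 s + (ω3 s * deriv ω2 s - ω2 s * deriv ω3 s) / (2 * (ω2 s ^ 2 + ω3 s ^ 2)))
    (hu2 : ∀ s ∈ Icc (0:ℝ) 1, u2 s = Real.sqrt (ω2 s ^ 2 + ω3 s ^ 2)) :
    (∀ s ∈ Icc (0:ℝ) 1, 0 < ω2 s ^ 2 + ω3 s ^ 2) ∧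
      ∀ q : ℝ → ℍ[ℝ], q 0 = 1 →
        (∀ s ∈ Icc (0:ℝ) 1,
          HasDerivAt q ((((u1 s : ℝ) : ℍ[ℝ]) * e1 + ((u2 s : ℝ) : ℍ[ℝ]) * e2) * q s) s) →
        q 1 = ((Real.cos αb : ℝ) : ℍ[ℝ]) +
          ((Real.sin αb : ℝ) : ℍ[ℝ]) *
            (((Real.cos βb : ℝ) : ℍ[ℝ]) * e2 + ((Real.sin βb : ℝ) : ℍ[ℝ]) * e3) := by
  obtain ⟨hαb0, hαbπ⟩ := hαb
  have hπ := Real.pi_pos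
  have hcβ : 0 ≤ Real.cos βb := Real.cos_nonneg_of_mem_Icc ⟨by linarith [hβb.1], hβb.2⟩
  -- sign facts about lamb
  have hsgn : Real.sin lamb * Real.cos lamb ≠ 0 ∧
      Real.sin (lamb + αb) * Real.cos (lamb + αb) ≠ 0 := by
    by_cases hmem : αb ∈ Icc (Real.pi/4) (3 * Real.pi/4)
    · rw [if_pos hmem] at hlamb
      obtain ⟨hm1, hm2⟩ := hmem
      have hs1 : Real.sin lamb < 0 := by
        apply Real.sin_neg_of_neg_of_neg_pi_lt <;> rw [hlamb] <;> linarith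
      have hc1 : 0 < Real.cos lamb := by
        apply Real.cos_pos_of_mem_Ioo; constructor <;> rw [hlamb] <;> linarith
      have hs2 : 0 < Real.sin (lamb + αb) := by
        apply Real.sin_pos_of_pos_of_lt_pi <;> rw [hlamb] <;> linarith
      have hc2 : 0 < Real.cos (lamb + αb) := by
        apply Real.cos_pos_of_mem_Ioo; constructor <;> rw [hlamb] <;> linarith
      exact ⟨mul_ne_zero (ne_of_lt hs1) (ne_of_gt hc1),
        mul_ne_zero (ne_of_gt hs2) (ne_of_gt hc2)⟩
    · rw [if_neg hmem] at hlamb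
      rw [mem_Icc, not_and_or, not_le, not_le] at hmem
      rcases hmem with hm | hm
      · have hs1 : 0 < Real.sin lamb := by
          apply Real.sin_pos_of_pos_of_lt_pi <;> rw [hlamb] <;> linarith
        have hc1 : 0 < Real.cos lamb := by
          apply Real.cos_pos_of_mem_Ioo; constructor <;> rw [hlamb] <;> linarith
        have hs2 : 0 < Real.sin (lamb + αb) := by
          apply Real.sin_pos_of_pos_of_lt_pi <;> rw [hlamb] <;> linarith
        have hc2 : 0 < Real.cos (lamb + αb) := by
          apply Real.cos_pos_of_mem_Ioo; constructor <;> rw [hlamb] <;> linarith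
        exact ⟨mul_ne_zero (ne_of_gt hs1) (ne_of_gt hc1),
          mul_ne_zero (ne_of_gt hs2) (ne_of_gt hc2)⟩
      · have hs1 : Real.sin lamb < 0 := by
          apply Real.sin_neg_of_neg_of_neg_pi_lt <;> rw [hlamb] <;> linarith
        have hc1 : 0 < Real.cos lamb := by
          apply Real.cos_pos_of_mem_Ioo; constructor <;> rw [hlamb] <;> linarith
        have hs2 : 0 < Real.sin (lamb + αb) := by
          apply Real.sin_pos_of_pos_of_lt_pi <;> rw [hlamb] <;> linarith
        have hc2 : Real.cos (lamb + αb) < 0 := by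
          apply Real.cos_neg_of_pi_div_two_lt_of_lt <;> rw [hlamb] <;> linarith
        exact ⟨mul_ne_zero (ne_of_lt hs1) (ne_of_gt hc1),
          mul_ne_zero (ne_of_gt hs2) (ne_of_lt hc2)⟩
  obtain ⟨hsc0, hsc1⟩ := hsgn
  -- α coefficients
  set P : ℝ := αb * Real.cos βb with hPdef
  set K : ℝ := αb - P with hKdef
  have hPnn : 0 ≤ P := mul_nonneg hαb0.le hcβ
  have hKval : K = αb * (1 - Real.cos βb) := by rw [hKdef, hPdef]; ring
  have hKnn : 0 ≤ K := by
    rw [hKval]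
    exact mul_nonneg hαb0.le (by linarith [Real.cos_le_one βb])
  have hPK : P + K = αb := by rw [hKdef]; ring
  obtain ⟨a, b, c, d, hαs⟩ := hαpoly
  have hdα0 : ∀ s, HasDerivAt α (3*a*s^2+2*b*s+c) s := by
    intro s
    exact (cubic_hasDerivAt a b c d s).congr_of_eventuallyEq
      (Filter.Eventually.of_forall fun t => hαs t)
  have ed : d = lamb := by have := hαs 0; rw [hα0] at this; linarith [this]
  have ec : c = P := by
    have h := (hdα0 0).deriv; rw [hα'0] at h; rw [hPdef]; linarith [h]
  have e4 : 3*a+2*b+c = P := by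
    have h := (hdα0 1).deriv; rw [hα'1] at h; rw [hPdef]; linarith [h]
  have e1' : a+b+c+d = lamb + αb := by have := hαs 1; rw [hα1] at this; linarith [this]
  have ea : a = -2*K := by rw [hKdef, hPdef]; linarith
  have eb : b = 3*K := by rw [hKdef, hPdef]; linarith
  set A1 : ℝ → ℝ := fun s => 3*a*s^2+2*b*s+c with hA1def
  have hdα : ∀ s, HasDerivAt α (A1 s) s := hdα0
  have hA1val : ∀ s, A1 s = P + 6*K*(s - s^2) := by
    intro s; rw [hA1def]; simp only [ea, eb, ec]; ring
  -- β coefficients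
  set B0 : ℝ := -(αb * Real.sin βb) / (Real.sin lamb * Real.cos lamb) with hB0def
  set B1 : ℝ := -(αb * Real.sin βb) / (Real.sin (lamb + αb) * Real.cos (lamb + αb)) with hB1def
  have hB0mul : B0 * (Real.sin lamb * Real.cos lamb) = -(αb * Real.sin βb) := by
    rw [hB0def]; exact div_mul_cancel₀ _ hsc0
  have hB1mul : B1 * (Real.sin (lamb + αb) * Real.cos (lamb + αb)) = -(αb * Real.sin βb) := by
    rw [hB1def]; exact div_mul_cancel₀ _ hsc1
  obtain ⟨p, qq, rr, w, hβs⟩ := hβpoly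
  have hdβ0 : ∀ s, HasDerivAt β (3*p*s^2+2*qq*s+rr) s := by
    intro s
    exact (cubic_hasDerivAt p qq rr w s).congr_of_eventuallyEq
      (Filter.Eventually.of_forall fun t => hβs t)
  have fw : w = βb := by have := hβs 0; rw [hβ0] at this; linarith [this]
  have fr : rr = B0 := by
    have h := (hdβ0 0).deriv; rw [hβ'0] at h; rw [hB0def]; linarith [h]
  have f4 : 3*p+2*qq+rr = B1 := by
    have h := (hdβ0 1).deriv; rw [hβ'1] at h; rw [hB1def]; linarith [h]
  have f1 : p+qq+rr+w = βb := by have := hβs 1; rw [hβ1] at this; linarith [this]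
  have fp : p = B0 + B1 := by linarith
  have fq : qq = -(2*B0+B1) := by linarith
  set Bp : ℝ → ℝ := fun s => 3*p*s^2+2*qq*s+rr with hBpdef
  have hdβ : ∀ s, HasDerivAt β (Bp s) s := hdβ0
  have hBp0 : Bp 0 = B0 := by rw [hBpdef]; simp [fr]
  have hBp1 : Bp 1 = B1 := by rw [hBpdef]; simp only []; rw [fp, fq, fr]; ring
  -- derived functions
  set dA1 : ℝ → ℝ := fun s => 2*(3*a)*s+2*b with hdA1def
  set dBp : ℝ → ℝ := fun s => 2*(3*p)*s+2*qq with hdBpdef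
  have hdA1 : ∀ s, HasDerivAt A1 (dA1 s) s := fun s => quadratic_hasDerivAt (3*a) (2*b) c s
  have hdBp : ∀ s, HasDerivAt Bp (dBp s) s := fun s => quadratic_hasDerivAt (3*p) (2*qq) rr s
  have hdsinα : ∀ s, HasDerivAt (fun s => Real.sin (α s)) (Real.cos (α s) * A1 s) s :=
    fun s => (Real.hasDerivAt_sin (α s)).comp s (hdα s)
  have hdcosα : ∀ s, HasDerivAt (fun s => Real.cos (α s)) (-Real.sin (α s) * A1 s) s :=
    fun s => (Real.hasDerivAt_cos (α s)).comp s (hdα s)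
  have hdsinβ : ∀ s, HasDerivAt (fun s => Real.sin (β s)) (Real.cos (β s) * Bp s) s :=
    fun s => (Real.hasDerivAt_sin (β s)).comp s (hdβ s)
  have hdcosβ : ∀ s, HasDerivAt (fun s => Real.cos (β s)) (-Real.sin (β s) * Bp s) s :=
    fun s => (Real.hasDerivAt_cos (β s)).comp s (hdβ s)
  set m : ℝ → ℝ := fun s => Bp s * Real.sin (α s) * Real.cos (α s) with hmdef
  set dm : ℝ → ℝ := fun s => (dBp s * Real.sin (α s) + Bp s * (Real.cos (α s) * A1 s)) * Real.cos (α s)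
      + Bp s * Real.sin (α s) * (-Real.sin (α s) * A1 s) with hdmdef
  have hdm : ∀ s, HasDerivAt m (dm s) s :=
    fun s => (((hdBp s).mul (hdsinα s)).mul (hdcosα s))
  set σ1 : ℝ → ℝ := fun s => Bp s * (Real.sin (α s) * Real.sin (α s)) with hσ1def
  set σ2 : ℝ → ℝ := fun s => A1 s * Real.cos (β s) - m s * Real.sin (β s) with hσ2def
  set σ3 : ℝ → ℝ := fun s => A1 s * Real.sin (β s) + m s * Real.cos (β s) with hσ3def
  set dσ2 : ℝ → ℝ := fun s => (dA1 s * Real.cos (β s) + A1 s * (-Real.sin (β s) * Bp s))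
      - (dm s * Real.sin (β s) + m s * (Real.cos (β s) * Bp s)) with hdσ2def
  set dσ3 : ℝ → ℝ := fun s => (dA1 s * Real.sin (β s) + A1 s * (Real.cos (β s) * Bp s))
      + (dm s * Real.cos (β s) + m s * (-Real.sin (β s) * Bp s)) with hdσ3def
  have hdσ2 : ∀ s, HasDerivAt σ2 (dσ2 s) s :=
    fun s => ((hdA1 s).mul (hdcosβ s)).sub ((hdm s).mul (hdsinβ s))
  have hdσ3 : ∀ s, HasDerivAt σ3 (dσ3 s) s :=
    fun s => ((hdA1 s).mul (hdsinβ s)).add ((hdm s).mul (hdcosβ s))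
  -- positivity
  have hid : ∀ s, σ2 s^2 + σ3 s^2 = A1 s^2 + m s^2 := by
    intro s
    rw [hσ2def, hσ3def]; simp only []
    linear_combination (A1 s^2 + m s^2) * Real.sin_sq_add_cos_sq (β s)
  have hA10 : A1 0 = P := by rw [hA1val]; ring
  have hA11 : A1 1 = P := by rw [hA1val]; ring
  have hm0 : m 0 = -(αb * Real.sin βb) := by
    rw [hmdef]; simp only []; rw [hBp0, hα0, mul_assoc, hB0mul]
  have hm1 : m 1 = -(αb * Real.sin βb) := by
    rw [hmdef]; simp only []; rw [hBp1, hα1, mul_assoc, hB1mul]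
  have hA1pos : ∀ s ∈ Ioo (0:ℝ) 1, 0 < A1 s := by
    intro s hs
    rw [hA1val]
    exact A1pos_aux P K s hPnn hKnn (by rw [hPK]; exact hαb0) hs.1 hs.2
  have hAm0 : A1 0^2 + m 0^2 = αb^2 := by
    rw [hA10, hm0, hPdef]
    linear_combination (αb^2) * Real.sin_sq_add_cos_sq βb
  have hAm1 : A1 1^2 + m 1^2 = αb^2 := by
    rw [hA11, hm1, hPdef]
    linear_combination (αb^2) * Real.sin_sq_add_cos_sq βb
  have hr2pos : ∀ s ∈ Icc (0:ℝ) 1, 0 < σ2 s^2 + σ3 s^2 := by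
    intro s hs
    rw [hid]
    rcases eq_or_lt_of_le hs.1 with h0 | h0
    · rw [← h0, hAm0]; positivity
    rcases eq_or_lt_of_le hs.2 with h1 | h1
    · rw [h1, hAm1]; positivity
    · have := hA1pos s ⟨h0, h1⟩; positivity
  set r : ℝ → ℝ := fun s => Real.sqrt (σ2 s^2 + σ3 s^2) with hrdef
  have hrpos : ∀ s ∈ Icc (0:ℝ) 1, 0 < r s := by
    intro s hs; rw [hrdef]; exact Real.sqrt_pos.2 (hr2pos s hs)
  have hr2 : ∀ s ∈ Icc (0:ℝ) 1, r s^2 = σ2 s^2 + σ3 s^2 := by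
    intro s hs; rw [hrdef]; exact Real.sq_sqrt (hr2pos s hs).le
  have hr0 : r 0 = αb := by
    rw [hrdef]; simp only []; rw [hid 0, hAm0]
    exact Real.sqrt_sq hαb0.le
  have hr1 : r 1 = αb := by
    rw [hrdef]; simp only []; rw [hid 1, hAm1]
    exact Real.sqrt_sq hαb0.le
  -- Y derivative
  set dY : ℝ → ℍ[ℝ] := fun s =>
    ((-Real.sin (α s) * A1 s : ℝ):ℍ[ℝ])
      + ((Real.cos (α s) * A1 s : ℝ):ℍ[ℝ])
        * (((Real.cos (β s):ℝ):ℍ[ℝ])*e2 + ((Real.sin (β s):ℝ):ℍ[ℝ])*e3)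
      + ((Real.sin (α s):ℝ):ℍ[ℝ])
        * (((-Real.sin (β s) * Bp s : ℝ):ℍ[ℝ])*e2 + ((Real.cos (β s) * Bp s:ℝ):ℍ[ℝ])*e3)
    with hdYdef
  have hdY : ∀ s, HasDerivAt Y (dY s) s := by
    intro s
    have h2nd : HasDerivAt (fun s => ((Real.cos (β s):ℝ):ℍ[ℝ])*e2 + ((Real.sin (β s):ℝ):ℍ[ℝ])*e3)
        (((-Real.sin (β s) * Bp s : ℝ):ℍ[ℝ])*e2 + ((Real.cos (β s) * Bp s:ℝ):ℍ[ℝ])*e3) s :=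
      ((hasDerivAt_qcoe (hdcosβ s)).mul_const e2).add ((hasDerivAt_qcoe (hdsinβ s)).mul_const e3)
    have h := (hasDerivAt_qcoe (hdcosα s)).add ((hasDerivAt_qcoe (hdsinα s)).mul h2nd)
    have h' : HasDerivAt (fun s => ((Real.cos (α s) : ℝ) : ℍ[ℝ]) +
        ((Real.sin (α s) : ℝ) : ℍ[ℝ]) *
          (((Real.cos (β s) : ℝ) : ℍ[ℝ]) * e2 + ((Real.sin (β s) : ℝ) : ℍ[ℝ]) * e3)) (dY s) s := by
      rw [hdYdef]
      refine h.congr_deriv (Eq.symm ?_)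
      simp only [add_assoc]
    exact h'.congr_of_eventuallyEq (Filter.Eventually.of_forall fun t => hYdef t)
  have hωσ : ∀ s ∈ Icc (0:ℝ) 1, ω1 s = σ1 s ∧ ω2 s = σ2 s ∧ ω3 s = σ3 s := by
    intro s hs
    have h := hω s hs
    rw [(hdY s).deriv, hYdef s, hdYdef] at h
    simp only [] at h
    rw [quatY (Real.cos (α s)) (Real.sin (α s)) (Real.cos (β s)) (Real.sin (β s)) (A1 s) (Bp s)
      (Real.sin_sq_add_cos_sq (α s)) (Real.sin_sq_add_cos_sq (β s))] at h
    refine ⟨?_, ?_, ?_⟩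
    · have h1 := congrArg QuaternionAlgebra.imI h
      simp at h1
      rw [hσ1def]; simp only []; linarith
    · have h1 := congrArg QuaternionAlgebra.imJ h
      simp at h1
      rw [hσ2def, hmdef]; simp only []; linarith
    · have h1 := congrArg QuaternionAlgebra.imK h
      simp at h1
      rw [hσ3def, hmdef]; simp only []; linarith
  have part1 : ∀ s ∈ Icc (0:ℝ) 1, 0 < ω2 s ^ 2 + ω3 s ^ 2 := by
    intro s hs
    rw [(hωσ s hs).2.1, (hωσ s hs).2.2]
    exact hr2pos s hs
  refine ⟨part1, ?_⟩
  -- continuity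
  have hαcont : Continuous α := continuous_iff_continuousAt.mpr fun s => (hdα s).continuousAt
  have hβcont : Continuous β := continuous_iff_continuousAt.mpr fun s => (hdβ s).continuousAt
  have hnumcont : Continuous (fun s => σ3 s * dσ2 s - σ2 s * dσ3 s) := by
    rw [hσ3def, hσ2def, hdσ2def, hdσ3def, hmdef, hdmdef, hA1def, hBpdef, hdA1def, hdBpdef]
    fun_prop
  have hdencont : Continuous (fun s => 2*(σ2 s^2 + σ3 s^2)) := by
    rw [hσ3def, hσ2def, hmdef, hA1def, hBpdef]
    fun_prop
  set G : ℝ → ℝ := fun s => (σ3 s * dσ2 s - σ2 s * dσ3 s) / (2*(σ2 s^2 + σ3 s^2)) with hGdef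
  have hGcontAt : ∀ s ∈ Icc (0:ℝ) 1, ContinuousAt G s := by
    intro s hs
    rw [hGdef]
    exact (hnumcont.continuousAt).div (hdencont.continuousAt)
      (by have := hr2pos s hs; positivity)
  have hGcont : ContinuousOn G (Icc 0 1) := fun s hs => (hGcontAt s hs).continuousWithinAt
  have hGsm : MeasureTheory.StronglyMeasurable G := by
    rw [hGdef]
    exact (hnumcont.measurable.div hdencont.measurable).stronglyMeasurable
  set φf : ℝ → ℝ := fun x => ∫ t in (0:ℝ)..x, G t with hφdef
  have hφ0 : φf 0 = 0 := by rw [hφdef]; simp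
  have hGint : ∀ x ∈ Icc (0:ℝ) 1, IntervalIntegrable G MeasureTheory.volume 0 x := by
    intro x hx
    apply ContinuousOn.intervalIntegrable
    apply hGcont.mono
    rw [uIcc_of_le hx.1]
    exact Icc_subset_Icc le_rfl hx.2
  have hdφ : ∀ s ∈ Ioo (0:ℝ) 1, HasDerivAt φf (G s) s := by
    intro s hs
    have hsI : s ∈ Icc (0:ℝ) 1 := ⟨hs.1.le, hs.2.le⟩
    exact intervalIntegral.integral_hasDerivAt_right (hGint s hsI)
      hGsm.stronglyMeasurableAtFilter (hGcontAt s hsI)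
  have hφcont : ContinuousOn φf (Icc 0 1) := by
    have : MeasureTheory.IntegrableOn G (uIcc (0:ℝ) 1) MeasureTheory.volume := by
      rw [uIcc_of_le zero_le_one]
      exact hGcont.integrableOn_Icc
    have h := intervalIntegral.continuousOn_primitive_interval this
    rw [uIcc_of_le zero_le_one] at h
    exact h
  -- continuity of sigma, r
  have hσ2cont : Continuous σ2 := by
    rw [hσ2def, hmdef, hA1def, hBpdef]; fun_prop
  have hσ3cont : Continuous σ3 := by
    rw [hσ3def, hmdef, hA1def, hBpdef]; fun_prop
  have hrcont : ContinuousOn r (Icc 0 1) := by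
    rw [hrdef]
    exact (Real.continuous_sqrt.comp ((hσ2cont.pow 2).add (hσ3cont.pow 2))).continuousOn
  have hrne : ∀ s ∈ Icc (0:ℝ) 1, r s ≠ 0 := fun s hs => (hrpos s hs).ne'
  -- derivative of r
  have hdr : ∀ s ∈ Icc (0:ℝ) 1, HasDerivAt r ((σ2 s * dσ2 s + σ3 s * dσ3 s)/r s) s := by
    intro s hs
    have hu : HasDerivAt (fun s => σ2 s^2+σ3 s^2) (2*σ2 s*dσ2 s + 2*σ3 s*dσ3 s) s := by
      have h := ((hdσ2 s).pow 2).add ((hdσ3 s).pow 2)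
      exact h.congr_deriv (by push_cast; ring)
    have h := (Real.hasDerivAt_sqrt (hr2pos s hs).ne').comp s hu
    have h' : HasDerivAt r (1/(2*Real.sqrt (σ2 s^2+σ3 s^2)) * (2*σ2 s*dσ2 s + 2*σ3 s*dσ3 s)) s := h
    convert h' using 1
    rw [hrdef]
    field_simp
  -- first ODE trick : cos/sin of 2φ
  have hσ20 : σ2 0 = αb := by
    rw [hσ2def]; simp only []; rw [hA10, hβ0, hm0, hPdef]
    linear_combination αb * Real.sin_sq_add_cos_sq βb
  have hσ30 : σ3 0 = 0 := by
    rw [hσ3def]; simp only []; rw [hA10, hβ0, hm0, hPdef]; ring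
  have hσ21 : σ2 1 = αb := by
    rw [hσ2def]; simp only []; rw [hA11, hβ1, hm1, hPdef]
    linear_combination αb * Real.sin_sq_add_cos_sq βb
  have hσ31 : σ3 1 = 0 := by
    rw [hσ3def]; simp only []; rw [hA11, hβ1, hm1, hPdef]; ring
  have hI0 : (0:ℝ) ∈ Icc (0:ℝ) 1 := ⟨le_rfl, zero_le_one⟩
  have hI1 : (1:ℝ) ∈ Icc (0:ℝ) 1 := ⟨zero_le_one, le_rfl⟩
  have key1 : ∀ s ∈ Icc (0:ℝ) 1,
      σ2 s / r s = Real.cos (2*φf s) ∧ -(σ3 s / r s) = Real.sin (2*φf s) := by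
    apply ode_trick (g := fun s => 2*G s)
    · exact (hσ2cont.continuousOn).div hrcont hrne
    · exact ((hσ3cont.continuousOn).div hrcont hrne).neg
    · exact (continuousOn_const.mul hφcont)
    · intro s hs
      have hsI : s ∈ Icc (0:ℝ) 1 := ⟨hs.1.le, hs.2.le⟩
      have h := (hdσ2 s).div (hdr s hsI) (hrne s hsI)
      refine h.congr_deriv (Eq.symm ?_)
      rw [hGdef]; simp only []
      exact (deriv_x_aux (σ2 s) (σ3 s) (dσ2 s) (dσ3 s) (r s) (hr2 s hsI) (hrne s hsI)).symm
    · intro s hs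
      have hsI : s ∈ Icc (0:ℝ) 1 := ⟨hs.1.le, hs.2.le⟩
      have h := ((hdσ3 s).div (hdr s hsI) (hrne s hsI)).neg
      refine h.congr_deriv (Eq.symm ?_)
      rw [hGdef]; simp only []
      exact (deriv_y_aux (σ2 s) (σ3 s) (dσ2 s) (dσ3 s) (r s) (hr2 s hsI) (hrne s hsI)).symm
    · intro s hs
      exact (hdφ s hs).const_mul 2
    · rw [hφ0, hσ20, hr0, show (2:ℝ)*0 = 0 by ring, Real.cos_zero, div_self hαb0.ne']
    · rw [hφ0, hσ30, show (2:ℝ)*0 = 0 by ring, Real.sin_zero, zero_div, neg_zero]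
  have hcos2φ : ∀ s ∈ Icc (0:ℝ) 1, σ2 s = r s * Real.cos (2*φf s) := by
    intro s hs
    rw [← (key1 s hs).1, mul_comm, div_mul_cancel₀ _ (hrne s hs)]
  have hsin2φ : ∀ s ∈ Icc (0:ℝ) 1, σ3 s = -(r s * Real.sin (2*φf s)) := by
    intro s hs
    rw [← (key1 s hs).2, mul_neg, neg_neg, mul_comm, div_mul_cancel₀ _ (hrne s hs)]
  -- second ODE trick : cos/sin of χ = 2φ + β
  have key2 : ∀ s ∈ Icc (0:ℝ) 1,
      A1 s / r s = Real.cos (2*φf s + β s) ∧ -(m s / r s) = Real.sin (2*φf s + β s) := by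
    have hA1cont : Continuous A1 := by rw [hA1def]; fun_prop
    have hmcont : Continuous m := by rw [hmdef, hBpdef]; fun_prop
    apply ode_trick (g := fun s => 2*G s + Bp s)
    · exact (hA1cont.continuousOn).div hrcont hrne
    · exact ((hmcont.continuousOn).div hrcont hrne).neg
    · exact (continuousOn_const.mul hφcont).add hβcont.continuousOn
    · intro s hs
      have hsI : s ∈ Icc (0:ℝ) 1 := ⟨hs.1.le, hs.2.le⟩
      have h := (hdA1 s).div (hdr s hsI) (hrne s hsI)
      refine h.congr_deriv (Eq.symm ?_)
      rw [hGdef]; simp only []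
      refine (deriv_xt_aux (A1 s) (m s) (dA1 s) (dm s) (Bp s) (Real.cos (β s)) (Real.sin (β s))
        (r s) (σ2 s) (σ3 s) (dσ2 s) (dσ3 s) (Real.sin_sq_add_cos_sq (β s)) ?_ (hrne s hsI)
        ?_ ?_ ?_ ?_).symm
      · rw [hr2 s hsI, hid s]
      · rw [hσ2def]
      · rw [hσ3def]
      · rw [hdσ2def]
      · rw [hdσ3def]
    · intro s hs
      have hsI : s ∈ Icc (0:ℝ) 1 := ⟨hs.1.le, hs.2.le⟩
      have h := ((hdm s).div (hdr s hsI) (hrne s hsI)).neg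
      refine h.congr_deriv (Eq.symm ?_)
      rw [hGdef]; simp only []
      refine (deriv_yt_aux (A1 s) (m s) (dA1 s) (dm s) (Bp s) (Real.cos (β s)) (Real.sin (β s))
        (r s) (σ2 s) (σ3 s) (dσ2 s) (dσ3 s) (Real.sin_sq_add_cos_sq (β s)) ?_ (hrne s hsI)
        ?_ ?_ ?_ ?_).symm
      · rw [hr2 s hsI, hid s]
      · rw [hσ2def]
      · rw [hσ3def]
      · rw [hdσ2def]
      · rw [hdσ3def]
    · intro s hs
      exact ((hdφ s hs).const_mul 2).add (hdβ s)
    · rw [hφ0, hβ0, hA10, hr0, hPdef]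
      rw [show 2*(0:ℝ) + βb = βb by ring]
      rw [mul_comm, mul_div_assoc, div_self hαb0.ne', mul_one]
    · rw [hφ0, hβ0, hm0, hr0]
      rw [show 2*(0:ℝ) + βb = βb by ring]
      field_simp
  -- χ(1) = βb  (no winding)
  have hχ1cos : Real.cos (2*φf 1 + β 1) = Real.cos βb := by
    rw [← (key2 1 hI1).1, hA11, hr1, hPdef, mul_comm, mul_div_assoc, div_self hαb0.ne', mul_one]
  have hχ1sin : Real.sin (2*φf 1 + β 1) = Real.sin βb := by
    rw [← (key2 1 hI1).2, hm1, hr1]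
    field_simp
  obtain ⟨k, hk⟩ : ∃ k : ℤ, (2*φf 1 + β 1) - βb = 2*Real.pi*k := by
    exact Real.Angle.angle_eq_iff_two_pi_dvd_sub.1 (Real.Angle.cos_sin_inj hχ1cos hχ1sin)
  have hχcont : ContinuousOn (fun s => 2*φf s + β s) (Icc 0 1) :=
    (continuousOn_const.mul hφcont).add hβcont.continuousOn
  have hχ0 : 2*φf 0 + β 0 = βb := by rw [hφ0, hβ0]; ring
  have hχpos : ∀ t ∈ Ioo (0:ℝ) 1, 0 < Real.cos (2*φf t + β t) := by
    intro t ht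
    have htI : t ∈ Icc (0:ℝ) 1 := ⟨ht.1.le, ht.2.le⟩
    rw [← (key2 t htI).1]
    exact div_pos (hA1pos t ht) (hrpos t htI)
  have hknot : k = 0 := by
    by_contra hkne
    have hcβπ : Real.cos (βb + Real.pi) ≤ 0 := by
      rw [Real.cos_add_pi]; linarith
    have hcβπ' : Real.cos (βb - Real.pi) ≤ 0 := by
      rw [Real.cos_sub_pi]; linarith
    rcases lt_or_gt_of_ne hkne with hneg | hpos
    · have hkle : (k:ℝ) ≤ -1 := by exact_mod_cast (by omega : k ≤ -1)
      have hmul : 2*Real.pi*(k:ℝ) ≤ 2*Real.pi*(-1) :=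
        mul_le_mul_of_nonneg_left hkle (by linarith)
      have h1 : 2*φf 1 + β 1 ≤ βb - 2*Real.pi := by linarith
      have hmem : βb - Real.pi ∈ Icc (2*φf 1 + β 1) (2*φf 0 + β 0) := by
        rw [hχ0]; constructor <;> linarith
      obtain ⟨t, ht, hχt⟩ := intermediate_value_Icc' zero_le_one hχcont hmem
      simp only [] at hχt
      have ht0 : t ≠ 0 := by
        intro h; rw [h, hχ0] at hχt; linarith
      have ht1 : t ≠ 1 := by
        intro h; rw [h] at hχt
        rw [hχt] at hk
        have : (2*k+1 : ℝ) * Real.pi = 0 := by linarith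
        have h2 : (2*(k:ℝ)+1) = 0 := by
          rcases mul_eq_zero.1 this with h | h
          · exact h
          · exact absurd h hπ.ne'
        have : (2*k+1 : ℤ) = 0 := by exact_mod_cast h2
        omega
      have htIoo : t ∈ Ioo (0:ℝ) 1 := ⟨lt_of_le_of_ne ht.1 (Ne.symm ht0), lt_of_le_of_ne ht.2 ht1⟩
      have := hχpos t htIoo
      rw [hχt] at this
      linarith
    · have hkge : (1:ℝ) ≤ (k:ℝ) := by exact_mod_cast hpos
      have hmul : 2*Real.pi*(1:ℝ) ≤ 2*Real.pi*(k:ℝ) :=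
        mul_le_mul_of_nonneg_left hkge (by linarith)
      have h1 : βb + 2*Real.pi ≤ 2*φf 1 + β 1 := by linarith
      have hmem : βb + Real.pi ∈ Icc (2*φf 0 + β 0) (2*φf 1 + β 1) := by
        rw [hχ0]; constructor <;> linarith
      obtain ⟨t, ht, hχt⟩ := intermediate_value_Icc zero_le_one hχcont hmem
      simp only [] at hχt
      have ht0 : t ≠ 0 := by
        intro h; rw [h, hχ0] at hχt; linarith
      have ht1 : t ≠ 1 := by
        intro h; rw [h] at hχt
        rw [hχt] at hk
        have : (2*k-1 : ℝ) * Real.pi = 0 := by linarith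
        have h2 : (2*(k:ℝ)-1) = 0 := by
          rcases mul_eq_zero.1 this with h | h
          · exact h
          · exact absurd h hπ.ne'
        have : (2*k-1 : ℤ) = 0 := by exact_mod_cast h2
        omega
      have htIoo : t ∈ Ioo (0:ℝ) 1 := ⟨lt_of_le_of_ne ht.1 (Ne.symm ht0), lt_of_le_of_ne ht.2 ht1⟩
      have := hχpos t htIoo
      rw [hχt] at this
      linarith
  have hφ1 : φf 1 = 0 := by
    rw [hknot] at hk
    rw [hβ1] at hk
    push_cast at hk
    linarith
  -- construction of the explicit solution p
  intro q hq0 hq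
  set Z : ℝ → ℍ[ℝ] := fun s => ((Real.cos (φf s) : ℝ):ℍ[ℝ]) + ((Real.sin (φf s):ℝ):ℍ[ℝ])*e1
    with hZdef
  set pY : ℝ → ℍ[ℝ] := fun s => Z s * (Y s * star (Y 0)) with hpdef
  have hYunit : ∀ s, star (Y s) * Y s = 1 := by
    intro s
    rw [hYdef s]
    exact quatUnit _ _ _ _ (Real.sin_sq_add_cos_sq (α s)) (Real.sin_sq_add_cos_sq (β s))
  have hYunit' : ∀ s, Y s * star (Y s) = 1 := by
    intro s
    rw [hYdef s]
    exact quatUnit' _ _ _ _ (Real.sin_sq_add_cos_sq (α s)) (Real.sin_sq_add_cos_sq (β s))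
  have hZ0 : Z 0 = 1 := by
    rw [hZdef]; simp only []; rw [hφ0]; norm_num
  have hZ1 : Z 1 = 1 := by
    rw [hZdef]; simp only []; rw [hφ1]; norm_num
  have hp0 : pY 0 = 1 := by
    rw [hpdef]; simp only []; rw [hZ0, hYunit' 0, one_mul]
  have hp1 : pY 1 = ((Real.cos αb : ℝ) : ℍ[ℝ]) +
      ((Real.sin αb : ℝ) : ℍ[ℝ]) *
        (((Real.cos βb : ℝ) : ℍ[ℝ]) * e2 + ((Real.sin βb : ℝ) : ℍ[ℝ]) * e3) := by
    have hcosid : Real.cos αb = Real.cos (lamb+αb)*Real.cos lamb + Real.sin (lamb+αb)*Real.sin lamb := by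
      have h := Real.cos_sub (lamb+αb) lamb
      rw [show lamb + αb - lamb = αb by ring] at h
      exact h
    have hsinid : Real.sin αb = Real.sin (lamb+αb)*Real.cos lamb - Real.cos (lamb+αb)*Real.sin lamb := by
      have h := Real.sin_sub (lamb+αb) lamb
      rw [show lamb + αb - lamb = αb by ring] at h
      exact h
    rw [hpdef]; simp only []
    rw [hZ1, one_mul, hYdef 1, hYdef 0, hα1, hα0, hβ1, hβ0]
    exact quatFinal _ _ _ _ _ _ _ _ (Real.sin_sq_add_cos_sq βb) hcosid hsinid
  -- p satisfies the ODE on the interior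
  have hdp : ∀ s ∈ Ioo (0:ℝ) 1,
      HasDerivAt pY ((((u1 s : ℝ) : ℍ[ℝ]) * e1 + ((u2 s : ℝ) : ℍ[ℝ]) * e2) * pY s) s := by
    intro s hs
    have hsI : s ∈ Icc (0:ℝ) 1 := ⟨hs.1.le, hs.2.le⟩
    have hev2 : ω2 =ᶠ[nhds s] σ2 :=
      Filter.eventuallyEq_of_mem (Icc_mem_nhds hs.1 hs.2) (fun t ht => (hωσ t ht).2.1)
    have hev3 : ω3 =ᶠ[nhds s] σ3 :=
      Filter.eventuallyEq_of_mem (Icc_mem_nhds hs.1 hs.2) (fun t ht => (hωσ t ht).2.2)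
    have hd2 : deriv ω2 s = dσ2 s := by rw [hev2.deriv_eq, (hdσ2 s).deriv]
    have hd3 : deriv ω3 s = dσ3 s := by rw [hev3.deriv_eq, (hdσ3 s).deriv]
    have hu1s : u1 s = σ1 s + G s := by
      rw [hu1 s hsI, (hωσ s hsI).1, (hωσ s hsI).2.1, (hωσ s hsI).2.2, hd2, hd3, hGdef]
    have hu2s : u2 s = r s := by
      rw [hu2 s hsI, (hωσ s hsI).2.1, (hωσ s hsI).2.2, hrdef]
    have hdφs := hdφ s hs
    have hdZ : HasDerivAt Z (((-Real.sin (φf s) * G s : ℝ):ℍ[ℝ])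
        + ((Real.cos (φf s) * G s : ℝ):ℍ[ℝ])*e1) s := by
      rw [hZdef]
      exact (hasDerivAt_qcoe ((Real.hasDerivAt_cos (φf s)).comp s hdφs)).add
        ((hasDerivAt_qcoe ((Real.hasDerivAt_sin (φf s)).comp s hdφs)).mul_const e1)
    have hdp0 : HasDerivAt pY ((((-Real.sin (φf s) * G s : ℝ):ℍ[ℝ])
        + ((Real.cos (φf s) * G s:ℝ):ℍ[ℝ])*e1) * (Y s * star (Y 0))
        + Z s * (dY s * star (Y 0))) s := by
      rw [hpdef]
      exact hdZ.mul ((hdY s).mul_const (star (Y 0)))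
    have hdYs : dY s = (((σ1 s:ℝ):ℍ[ℝ])*e1 + ((σ2 s:ℝ):ℍ[ℝ])*e2 + ((σ3 s:ℝ):ℍ[ℝ])*e3) * Y s := by
      have h1 : dY s * star (Y s)
          = ((σ1 s:ℝ):ℍ[ℝ])*e1 + ((σ2 s:ℝ):ℍ[ℝ])*e2 + ((σ3 s:ℝ):ℍ[ℝ])*e3 := by
        rw [hdYdef, hYdef s]; simp only []
        rw [quatY (Real.cos (α s)) (Real.sin (α s)) (Real.cos (β s)) (Real.sin (β s)) (A1 s) (Bp s)
          (Real.sin_sq_add_cos_sq (α s)) (Real.sin_sq_add_cos_sq (β s))]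
      calc dY s = dY s * (star (Y s) * Y s) := by rw [hYunit s, mul_one]
      _ = (dY s * star (Y s)) * Y s := by rw [mul_assoc]
      _ = _ := by rw [h1]
    have hc2 : σ2 s = r s * (Real.cos (φf s) * Real.cos (φf s) - Real.sin (φf s) * Real.sin (φf s)) := by
      rw [hcos2φ s hsI]
      linear_combination (r s) * Real.cos_two_mul (φf s) + (r s) * Real.sin_sq_add_cos_sq (φf s)
    have hc3 : σ3 s = -(r s * (2 * Real.cos (φf s) * Real.sin (φf s))) := by
      rw [hsin2φ s hsI]
      linear_combination (-(r s)) * Real.sin_two_mul (φf s)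
    have hkey := keyQuat (Real.cos (φf s)) (Real.sin (φf s)) (σ1 s) (σ2 s) (σ3 s) (G s) (r s)
      (Real.sin_sq_add_cos_sq (φf s)) hc2 hc3
    convert hdp0 using 1
    rw [show ((u1 s : ℝ):ℍ[ℝ]) = ((σ1 s + G s : ℝ):ℍ[ℝ]) from by rw [hu1s],
        show ((u2 s : ℝ):ℍ[ℝ]) = ((r s : ℝ):ℍ[ℝ]) from by rw [hu2s]]
    rw [hpdef]; simp only []
    rw [hdYs]
    calc (((σ1 s + G s : ℝ):ℍ[ℝ])*e1 + ((r s:ℝ):ℍ[ℝ])*e2) * (Z s * (Y s * star (Y 0)))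
        = ((((σ1 s + G s : ℝ):ℍ[ℝ])*e1 + ((r s:ℝ):ℍ[ℝ])*e2) * Z s) * (Y s * star (Y 0)) := by
          rw [mul_assoc]
    _ = ((((-Real.sin (φf s) * G s : ℝ):ℍ[ℝ]) + ((Real.cos (φf s) * G s:ℝ):ℍ[ℝ])*e1)
          + Z s * (((σ1 s:ℝ):ℍ[ℝ])*e1 + ((σ2 s:ℝ):ℍ[ℝ])*e2 + ((σ3 s:ℝ):ℍ[ℝ])*e3))
          * (Y s * star (Y 0)) := by
          rw [hZdef]; simp only []
          rw [← hkey]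
    _ = _ := by
          rw [add_mul]
          simp only [mul_assoc]
  -- uniqueness argument
  set w : ℝ → ℍ[ℝ] := fun s => star (pY s) * q s with hwdef
  have hdw : ∀ s ∈ Ioo (0:ℝ) 1, HasDerivAt w 0 s := by
    intro s hs
    have hsI : s ∈ Icc (0:ℝ) 1 := ⟨hs.1.le, hs.2.le⟩
    have h1 : HasDerivAt (fun s => star (pY s))
        (star (((((u1 s : ℝ) : ℍ[ℝ]) * e1 + ((u2 s : ℝ) : ℍ[ℝ]) * e2)) * pY s)) s :=
      (hdp s hs).star
    have h2 := h1.mul (hq s hsI)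
    rw [hwdef]
    refine h2.congr_deriv (Eq.symm ?_)
    rw [star_mul, starA (u1 s) (u2 s)]
    noncomm_ring
  have hqcont : ContinuousOn q (Icc 0 1) := fun s hs => (hq s hs).continuousAt.continuousWithinAt
  have hYcont : Continuous Y := continuous_iff_continuousAt.mpr fun s => (hdY s).continuousAt
  have hZcont : ContinuousOn Z (Icc 0 1) := by
    rw [hZdef]
    exact ((Quaternion.continuous_coe.comp_continuousOn
        (Real.continuous_cos.comp_continuousOn hφcont)).add
      ((Quaternion.continuous_coe.comp_continuousOn
        (Real.continuous_sin.comp_continuousOn hφcont)).mul continuousOn_const))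
  have hpcont : ContinuousOn pY (Icc 0 1) := by
    rw [hpdef]
    exact hZcont.mul ((hYcont.continuousOn).mul continuousOn_const)
  have hwcont : ContinuousOn w (Icc 0 1) := by
    rw [hwdef]
    exact (continuous_star.comp_continuousOn hpcont).mul hqcont
  have hwconst := const_on_Icc hwcont hdw
  have hw0 : w 0 = 1 := by
    rw [hwdef]; simp only []; rw [hp0, hq0]; simp
  have hw1 : w 1 = 1 := by rw [hwconst 1 hI1, hw0]
  have hp1unit : pY 1 * star (pY 1) = 1 := by
    rw [hp1]
    exact quatUnit' _ _ _ _ (Real.sin_sq_add_cos_sq αb) (Real.sin_sq_add_cos_sq βb)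
  have hq1 : q 1 = pY 1 := by
    have h : star (pY 1) * q 1 = 1 := by
      have := hw1
      rw [hwdef] at this
      exact this
    calc q 1 = 1 * q 1 := (one_mul _).symm
    _ = (pY 1 * star (pY 1)) * q 1 := by rw [hp1unit]
    _ = pY 1 * (star (pY 1) * q 1) := by rw [mul_assoc]
    _ = pY 1 * 1 := by rw [h]
    _ = pY 1 := mul_one _
  rw [hq1, hp1]
end

section
/- Norm preservation: let I ⊆ ℝ be an interval containing t0, let w : I → ℍ be continuous with vanishing real part (Re w(t) = 0 for all t ∈ I), and let q : I → ℍ be differentiable with q'(t) = w(t)·q(t) on I and ‖q(t0)‖ = 1. Then ‖q(t)‖ = 1 for all t ∈ I. -/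
open Quaternion Set

/-
A solution of `q' = w q` has `(‖q‖²)' = 2 ⟪q, w q⟫ = 2 (Re w) ‖q‖²`, since
`⟪q, w q⟫ = Re (q (q̄ w̄)) = ‖q‖² Re w̄`. For purely imaginary `w` this vanishes, so `‖q‖²` is
constant on the interval by the mean value inequality.
-/

theorem Quaternion.inner_mul_right_eq_re_mul_norm_sq (a q : ℍ[ℝ]) :
    inner ℝ q (a * q) = a.re * ‖q‖ ^ 2 := by
  rw [inner_def, star_mul, ← mul_assoc, self_mul_star, normSq_eq_norm_mul_self,
    coe_mul_eq_smul, re_smul, re_star, smul_eq_mul]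
  ring

theorem HasDerivAt.norm_sq_of_mul_left {q : ℝ → ℍ[ℝ]} {a : ℍ[ℝ]} {t : ℝ}
    (hq : HasDerivAt q (a * q t) t) :
    HasDerivAt (‖q ·‖ ^ 2) (2 * a.re * ‖q t‖ ^ 2) t := by
  simpa only [Quaternion.inner_mul_right_eq_re_mul_norm_sq, mul_assoc] using hq.norm_sq

theorem Convex.is_const_of_hasDerivWithinAt_zero {E : Type*} [NormedAddCommGroup E]
    [NormedSpace ℝ E] {f : ℝ → E} {s : Set ℝ} (hs : Convex ℝ s)
    (hf : ∀ x ∈ s, HasDerivWithinAt f 0 s x) {x y : ℝ} (hx : x ∈ s) (hy : y ∈ s) :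
    f x = f y := by
  have h := hs.norm_image_sub_le_of_norm_hasDerivWithin_le hf (fun _ _ => norm_zero.le) hx hy
  rw [zero_mul, norm_le_zero_iff, sub_eq_zero] at h
  exact h.symm

theorem stmt_18_general
    (I : Set ℝ) (hI : I.OrdConnected) (t0 : ℝ) (ht0 : t0 ∈ I)
    (w : ℝ → ℍ[ℝ])
    (hwre : ∀ t ∈ I, (w t).re = 0)
    (q : ℝ → ℍ[ℝ])
    (hq : ∀ t ∈ I, HasDerivAt q (w t * q t) t)
    (hq0 : ‖q t0‖ = 1) :
    ∀ t ∈ I, ‖q t‖ = 1 := by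
  have hderiv : ∀ t ∈ I, HasDerivWithinAt (‖q ·‖ ^ 2) 0 I t := fun t ht => by
    simpa only [hwre t ht, mul_zero, zero_mul] using
      (hq t ht).norm_sq_of_mul_left.hasDerivWithinAt
  intro t ht
  have hsq : ‖q t‖ ^ 2 = 1 := by
    rw [hI.convex.is_const_of_hasDerivWithinAt_zero hderiv ht ht0, hq0, one_pow]
  exact (pow_eq_one_iff_of_nonneg (norm_nonneg _) two_ne_zero).1 hsq

theorem stmt_18
    (I : Set ℝ) (hI : I.OrdConnected) (t0 : ℝ) (ht0 : t0 ∈ I)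
    (w : ℝ → ℍ[ℝ]) (hw : ContinuousOn w I)
    (hwre : ∀ t ∈ I, (w t).re = 0)
    (q : ℝ → ℍ[ℝ])
    (hq : ∀ t ∈ I, HasDerivAt q (w t * q t) t)
    (hq0 : ‖q t0‖ = 1) :
    ∀ t ∈ I, ‖q t‖ = 1 :=
  stmt_18_general I hI t0 ht0 w hwre q hq hq0
end

section
/- Steering by right translation along a fixed axis: let ᾱ, λ̄, β̄ ∈ ℝ and set v = cos β̄ · e2 + sin β̄ · e3. Suppose q : [0,1] → ℍ is a differentiable solution of q'(s) = (u1(s) e1 + u2(s) e2)·q(s) with q(0) = 1 and q(1) = cos ᾱ + sin ᾱ · v. Then p(s) := q(s)·(cos λ̄ + sin λ̄ · v) is a solution of the same equation with the same controls, and satisfies p(0) = cos λ̄ + sin λ̄ · v and p(1) = cos(λ̄ + ᾱ) + sin(λ̄ + ᾱ) · v. -/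
open Quaternion Set

/-!
Right multiplication by a constant commutes with the left-invariant equation `q' = u q`, so
`q · w` solves it whenever `q` does. Since `v² = -1`, the elements `cos t + sin t · v` obey
Euler's addition law `exp (α v) exp (λ v) = exp ((α + λ) v)`, which gives the endpoint values.
-/

theorem cos_add_sin_mul_mul_cos_add_sin_mul {A : Type*} [Ring A] [Algebra ℝ A] {v : A}
    (hv : v * v = -1) (a b : ℝ) :
    (algebraMap ℝ A (Real.cos a) + algebraMap ℝ A (Real.sin a) * v) *
        (algebraMap ℝ A (Real.cos b) + algebraMap ℝ A (Real.sin b) * v) =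
      algebraMap ℝ A (Real.cos (a + b)) + algebraMap ℝ A (Real.sin (a + b)) * v := by
  simp only [← Algebra.smul_def]
  simp only [Algebra.algebraMap_eq_smul_one, add_mul, mul_add, smul_mul_smul_comm, one_mul,
    mul_one, hv, Real.cos_add, Real.sin_add]
  module

theorem mul_self_cos_mul_e2_add_sin_mul_e3 (β : ℝ) :
    ((Real.cos β : ℍ[ℝ]) * e2 + (Real.sin β : ℍ[ℝ]) * e3) *
      ((Real.cos β : ℍ[ℝ]) * e2 + (Real.sin β : ℍ[ℝ]) * e3) = -1 := by
  ext <;> simp only [re_mul, imI_mul, imJ_mul, imK_mul, re_add, imI_add, imJ_add, imK_add] <;>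
    simp [e2, e3]
  · linear_combination -Real.sin_sq_add_cos_sq β
  · ring

theorem stmt_19
    (αb lamb βb : ℝ)
    (v : ℍ[ℝ])
    (hv : v = ((Real.cos βb : ℝ) : ℍ[ℝ]) * e2 + ((Real.sin βb : ℝ) : ℍ[ℝ]) * e3)
    (q : ℝ → ℍ[ℝ]) (u1 u2 : ℝ → ℝ)
    (hq : ∀ s ∈ Icc (0:ℝ) 1,
      HasDerivAt q ((((u1 s : ℝ) : ℍ[ℝ]) * e1 + ((u2 s : ℝ) : ℍ[ℝ]) * e2) * q s) s)
    (hq0 : q 0 = 1)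
    (hq1 : q 1 = ((Real.cos αb : ℝ) : ℍ[ℝ]) + ((Real.sin αb : ℝ) : ℍ[ℝ]) * v) :
    (∀ s ∈ Icc (0:ℝ) 1,
      HasDerivAt (fun s => q s * (((Real.cos lamb : ℝ) : ℍ[ℝ]) + ((Real.sin lamb : ℝ) : ℍ[ℝ]) * v))
        ((((u1 s : ℝ) : ℍ[ℝ]) * e1 + ((u2 s : ℝ) : ℍ[ℝ]) * e2) *
          (q s * (((Real.cos lamb : ℝ) : ℍ[ℝ]) + ((Real.sin lamb : ℝ) : ℍ[ℝ]) * v))) s) ∧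
    q 0 * (((Real.cos lamb : ℝ) : ℍ[ℝ]) + ((Real.sin lamb : ℝ) : ℍ[ℝ]) * v) =
      ((Real.cos lamb : ℝ) : ℍ[ℝ]) + ((Real.sin lamb : ℝ) : ℍ[ℝ]) * v ∧
    q 1 * (((Real.cos lamb : ℝ) : ℍ[ℝ]) + ((Real.sin lamb : ℝ) : ℍ[ℝ]) * v) =
      ((Real.cos (lamb + αb) : ℝ) : ℍ[ℝ]) + ((Real.sin (lamb + αb) : ℝ) : ℍ[ℝ]) * v := by
  refine ⟨fun s hs => by simpa only [mul_assoc] using (hq s hs).mul_const _,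
    by rw [hq0, one_mul], ?_⟩
  have hv_sq : v * v = -1 := hv ▸ mul_self_cos_mul_e2_add_sin_mul_e3 βb
  rw [hq1, add_comm lamb αb]
  simpa only [Quaternion.algebraMap_def] using cos_add_sin_mul_mul_cos_add_sin_mul hv_sq αb lamb
end
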